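/- arXiv:2307.14876 — 6 statements merged into one kernel-verified Lean document; each statement's English description precedes it below -/
import Mathlib

section
/- Property 2 (re-sequencing of old jobs can be necessary when minimizing total disruption). There exist finite disjoint sets of old jobs J^O and new jobs J^N with positive integer processing times and integer due dates, an initial schedule π* of the old jobs, and an integer ε, such that: (i) some schedule of J = J^O ∪ J^N with Lmax ≤ ε preserves the old-job order of π*; and (ii) there is a schedule σ of J with Lmax(σ) ≤ ε in which two old jobs appear in the opposite order to their order in π*, and Δ̄(σ) < Δ̄(σ') for every schedule σ' of J with Lmax(σ') ≤ ε that preserves the old-job order of π*. Hence an optimal schedule for minimizing Δ̄ subject to the constraint Lmax ≤ ε may have old jobs in a different order than π*, even though feasible order-preserving schedules exist. -/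
open Finset

/-- A schedule of the job set `K`: each job gets a start time, and the processing
intervals `[S j, S j + p j)` of distinct jobs are pairwise disjoint. -/
def IsSchedule (K : Finset ℕ) (p S : ℕ → ℕ) : Prop :=
  ∀ i ∈ K, ∀ j ∈ K, i ≠ j → S i + p i ≤ S j ∨ S j + p j ≤ S i

/-- No inserted idle time: the processing intervals exactly partition `[0, Σ p)`
(jobs are processed consecutively from time 0). -/
def NoIdle (K : Finset ℕ) (p S : ℕ → ℕ) : Prop :=
  (∀ j ∈ K, S j + p j ≤ ∑ i ∈ K, p i) ∧
    ∀ t < ∑ i ∈ K, p i, ∃ j ∈ K, S j ≤ t ∧ t < S j + p j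

/-- Disruption of job `j`: `|C_j(S) - C_j(π)|`. -/
def disr (p π S : ℕ → ℕ) (j : ℕ) : ℕ :=
  (((S j + p j : ℕ) : ℤ) - ((π j + p j : ℕ) : ℤ)).natAbs

/-- Maximum disruption over the old jobs. -/
def Dmax (JO : Finset ℕ) (p π S : ℕ → ℕ) : ℕ := JO.sup (disr p π S)

/-- Total disruption over the old jobs. -/
def Dsum (JO : Finset ℕ) (p π S : ℕ → ℕ) : ℕ := ∑ j ∈ JO, disr p π S j

/-- `S` preserves the old-job order of `π`: old jobs completing earlier in `π`
complete earlier in `S`. -/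
def PreservesOrder (JO : Finset ℕ) (p π S : ℕ → ℕ) : Prop :=
  ∀ i ∈ JO, ∀ j ∈ JO, π i + p i < π j + p j → S i + p i < S j + p j

/-- Maximum lateness `max_{j ∈ J} (C_j - d_j)`. -/
def Lmax (J : Finset ℕ) (p : ℕ → ℕ) (d : ℕ → ℤ) (S : ℕ → ℕ) : WithBot ℤ :=
  J.sup fun j => (((((S j + p j : ℕ) : ℤ) - d j : ℤ)) : WithBot ℤ)

/-- Number of tardy jobs. -/
def nTardy (J : Finset ℕ) (p : ℕ → ℕ) (d : ℕ → ℤ) (S : ℕ → ℕ) : ℕ :=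
  (J.filter fun j => d j < ((S j + p j : ℕ) : ℤ)).card

/-- Total tardiness `Σ_{j ∈ J} max 0 (C_j - d_j)`. -/
def Ttot (J : Finset ℕ) (p : ℕ → ℕ) (d : ℕ → ℤ) (S : ℕ → ℕ) : ℤ :=
  ∑ j ∈ J, max 0 (((S j + p j : ℕ) : ℤ) - d j)

/-- Total completion time. -/
def Ctot (J : Finset ℕ) (p S : ℕ → ℕ) : ℕ := ∑ j ∈ J, (S j + p j)

/-- Total weighted completion time. -/
def wCtot (J : Finset ℕ) (w p S : ℕ → ℕ) : ℕ := ∑ j ∈ J, w j * (S j + p j)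

/-- Maximum of the regular costs `f_j(C_j)`. -/
def Fmax (J : Finset ℕ) (p : ℕ → ℕ) (f : ℕ → ℕ → ℝ) (S : ℕ → ℕ) : WithBot ℝ :=
  J.sup fun j => ((f j (S j + p j) : ℝ) : WithBot ℝ)

/-- Sum of the regular costs `f_j(C_j)`. -/
def Fsum (J : Finset ℕ) (p : ℕ → ℕ) (f : ℕ → ℕ → ℝ) (S : ℕ → ℕ) : ℝ :=
  ∑ j ∈ J, f j (S j + p j)

/-- Property 2: re-sequencing of the old jobs can be necessary when minimizing the
total disruption subject to `Lmax ≤ ε`. -/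
theorem resequencing_necessary_Dsum_Lmax :
    ∃ (JO JN : Finset ℕ) (p : ℕ → ℕ) (d : ℕ → ℤ) (π : ℕ → ℕ) (ε : ℤ),
      Disjoint JO JN ∧ (∀ j ∈ JO ∪ JN, 0 < p j) ∧ IsSchedule JO p π ∧
      (∃ τ, IsSchedule (JO ∪ JN) p τ ∧ Lmax (JO ∪ JN) p d τ ≤ (ε : WithBot ℤ) ∧
        PreservesOrder JO p π τ) ∧
      (∃ σ, IsSchedule (JO ∪ JN) p σ ∧ Lmax (JO ∪ JN) p d σ ≤ (ε : WithBot ℤ) ∧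
        (∃ i ∈ JO, ∃ j ∈ JO, π i + p i < π j + p j ∧ σ j + p j < σ i + p i) ∧
        ∀ σ', IsSchedule (JO ∪ JN) p σ' → Lmax (JO ∪ JN) p d σ' ≤ (ε : WithBot ℤ) →
          PreservesOrder JO p π σ' → Dsum JO p π σ < Dsum JO p π σ') := by
  refine ⟨{1,2}, {3}, (fun j => if j = 2 then 1 else 3),
      (fun j => if j = 3 then 3 else 7), (fun j => if j = 1 then 0 else 3), 0,
      by decide, by decide, by (unfold IsSchedule; decide), ?_, ?_⟩
  · refine ⟨(fun j => if j = 3 then 0 else if j = 1 then 3 else 6),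
      by (unfold IsSchedule; decide), ?_, by (unfold PreservesOrder; decide)⟩
    unfold Lmax
    apply Finset.sup_le
    intro j hj
    fin_cases hj <;> simp
  · refine ⟨(fun j => if j = 3 then 0 else if j = 2 then 3 else 4),
      by (unfold IsSchedule; decide), ?_,
      ⟨1, by decide, 2, by decide, by decide, by decide⟩, ?_⟩
    · unfold Lmax
      apply Finset.sup_le
      intro j hj
      fin_cases hj <;> simp
    · intro σ' hs hl hp
      have key : ∀ j ∈ ({1,2} : Finset ℕ) ∪ {3},
          ((σ' j + (if j = 2 then 1 else 3) : ℕ) : ℤ) - (if j = 3 then 3 else 7) ≤ 0 := by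
        intro j hj
        have h := Finset.le_sup (f := fun j =>
          ((((σ' j + (if j = 2 then 1 else 3) : ℕ) : ℤ) - (if j = 3 then 3 else 7) : ℤ) : WithBot ℤ)) hj
        have := le_trans h hl
        exact WithBot.coe_le_coe.mp this
      have h1 := key 1 (by decide)
      have h2 := key 2 (by decide)
      have h3 := key 3 (by decide)
      norm_num at h1 h2 h3
      -- σ' 3 = 0
      have hs3 : σ' 3 = 0 := by omega
      -- σ' 1 ≥ 3 from disjointness with job 3
      have hd := hs 3 (by decide) 1 (by decide) (by decide)
      norm_num [hs3] at hd
      have hS1 : 3 ≤ σ' 1 := by omega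
      -- order preservation: σ'1 + 3 < σ'2 + 1
      have ho := hp 1 (by decide) 2 (by decide) (by decide)
      norm_num at ho
      -- so σ'2 ≥ σ'1 + 3 ≥ 6, and σ'2 ≤ 6, hence σ'2 = 6, σ'1 = 3
      have h2' : σ' 2 = 6 := by omega
      have h1' : σ' 1 = 3 := by omega
      unfold Dsum disr
      simp [h1', h2']
end

section
/- Property 3 (no inserted idle time is needed when the old-job order is preserved). Assume the initial schedule π* of the old jobs has no inserted idle time (the old jobs are processed consecutively from time 0). Let σ be any schedule of J = J^O ∪ J^N that preserves the old-job order of π*, and let σ₀ be the no-idle schedule that processes the jobs of J in the same relative order as σ, consecutively from time 0. Then Δmax(σ₀) ≤ Δmax(σ) and Δ̄(σ₀) ≤ Δ̄(σ), and for any family of regular costs f_j, f_max(σ₀) ≤ f_max(σ) and f̄(σ₀) ≤ f̄(σ). Consequently, if an optimal solution of a rescheduling problem with regular objective and disruption constraint has old jobs ordered as in π*, there is an optimal solution without inserted idle times. -/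
open Finset

/-!
Both inequalities come from one counting argument. If `S₀` has no idle time, the jobs completing
no later than `j` in `S₀` cover `[0, C_j(S₀))`, so their processing times add up to at least
`C_j(S₀)`; if those jobs also complete no later than `j` in another schedule `S`, they are packed
disjointly into `[0, C_j(S))`, whence `C_j(S₀) ≤ C_j(S)`. Applied to `σ₀` against `σ` (same order)
and to `π*` against `σ₀` (old-job order preserved), this gives
`C_j(π*) ≤ C_j(σ₀) ≤ C_j(σ)` for every old job, so no disruption grows, and `C_j(σ₀) ≤ C_j(σ)`
for every job, so no regular cost grows.
-/

lemma le_sum_of_cover {T : Finset ℕ} {p S : ℕ → ℕ} {C : ℕ}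
    (h : ∀ t < C, ∃ i ∈ T, S i ≤ t ∧ t < S i + p i) : C ≤ ∑ i ∈ T, p i := by
  have hsub : range C ⊆ T.biUnion fun i => Ico (S i) (S i + p i) := by
    intro t ht
    obtain ⟨i, hi, hit⟩ := h t (mem_range.1 ht)
    exact mem_biUnion.2 ⟨i, hi, mem_Ico.2 hit⟩
  calc C = #(range C) := (card_range C).symm
    _ ≤ #(T.biUnion fun i => Ico (S i) (S i + p i)) := card_le_card hsub
    _ ≤ ∑ i ∈ T, #(Ico (S i) (S i + p i)) := card_biUnion_le
    _ = ∑ i ∈ T, p i := by simp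

namespace IsSchedule

variable {K : Finset ℕ} {p S : ℕ → ℕ}

lemma mono {L : Finset ℕ} (hKL : K ⊆ L) (hS : IsSchedule L p S) : IsSchedule K p S :=
  fun i hi j hj hij => hS i (hKL hi) j (hKL hj) hij

lemma sum_le_of_completion_le (hS : IsSchedule K p S) {B : ℕ} (hB : ∀ i ∈ K, S i + p i ≤ B) :
    ∑ i ∈ K, p i ≤ B := by
  have hdisj : (K : Set ℕ).PairwiseDisjoint fun i => Ico (S i) (S i + p i) := by
    intro i hi j hj hij
    refine disjoint_left.2 fun t hti htj => ?_
    rw [mem_Ico] at hti htj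
    rcases hS i hi j hj hij with h | h <;> omega
  have hsub : (K.biUnion fun i => Ico (S i) (S i + p i)) ⊆ range B := by
    intro t ht
    obtain ⟨i, hi, hti⟩ := mem_biUnion.1 ht
    have := hB i hi
    rw [mem_Ico] at hti
    exact mem_range.2 (by omega)
  calc ∑ i ∈ K, p i = #(K.biUnion fun i => Ico (S i) (S i + p i)) := by
        rw [card_biUnion hdisj]; simp
    _ ≤ #(range B) := card_le_card hsub
    _ = B := card_range B

variable {i j : ℕ}

lemma completion_le_of_start_lt (hS : IsSchedule K p S) (hi : i ∈ K) (hj : j ∈ K)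
    (hij : i ≠ j) (h : S i < S j) : S i + p i ≤ S j + p j := by
  rcases hS i hi j hj hij with h' | h' <;> omega

lemma completion_lt_of_start_lt (hS : IsSchedule K p S) (hi : i ∈ K) (hj : j ∈ K)
    (hij : i ≠ j) (hpj : 0 < p j) (h : S i < S j) : S i + p i < S j + p j := by
  rcases hS i hi j hj hij with h' | h' <;> omega

lemma start_lt_of_completion_le (hS : IsSchedule K p S) (hi : i ∈ K) (hj : j ∈ K)
    (hij : i ≠ j) (hpi : 0 < p i) (h : S i + p i ≤ S j + p j) : S i < S j := by
  rcases hS i hi j hj hij with h' | h' <;> omega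

end IsSchedule

lemma completion_le_of_noIdle {K : Finset ℕ} {p S₀ S : ℕ → ℕ}
    (hS₀ : IsSchedule K p S₀) (hS₀ni : NoIdle K p S₀) (hS : IsSchedule K p S)
    {j : ℕ} (hj : j ∈ K)
    (hbefore : ∀ i ∈ K, i ≠ j → S₀ i + p i ≤ S₀ j + p j → S i + p i ≤ S j + p j) :
    S₀ j + p j ≤ S j + p j := by
  set T := K.filter fun i => S₀ i + p i ≤ S₀ j + p j
  have hcover : S₀ j + p j ≤ ∑ i ∈ T, p i := by
    refine le_sum_of_cover (S := S₀) fun t ht => ?_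
    obtain ⟨i, hi, hit⟩ := hS₀ni.2 t (ht.trans_le (hS₀ni.1 j hj))
    refine ⟨i, mem_filter.2 ⟨hi, ?_⟩, hit⟩
    rcases eq_or_ne i j with rfl | hij
    · exact le_rfl
    · rcases hS₀ i hi j hj hij with h | h <;> omega
  have hpack : ∑ i ∈ T, p i ≤ S j + p j := by
    refine (hS.mono (filter_subset _ K)).sum_le_of_completion_le fun i hi => ?_
    obtain ⟨hiK, hle⟩ := mem_filter.1 hi
    rcases eq_or_ne i j with rfl | hij
    · exact le_rfl
    · exact hbefore i hiK hij hle
  exact hcover.trans hpack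

lemma disr_le_disr_of_completion_between {p π S₀ S : ℕ → ℕ} {j : ℕ}
    (hπS₀ : π j + p j ≤ S₀ j + p j) (hS₀S : S₀ j + p j ≤ S j + p j) :
    disr p π S₀ j ≤ disr p π S j := by
  unfold disr
  omega

theorem no_idle_needed_when_order_preserved_general
    (JO JN : Finset ℕ) (p π : ℕ → ℕ) (f : ℕ → ℕ → ℝ)
    (hp : ∀ j ∈ JO ∪ JN, 0 < p j)
    (hπ : IsSchedule JO p π) (hπni : NoIdle JO p π)
    (hreg : ∀ j ∈ JO ∪ JN, Monotone (f j))
    (σ : ℕ → ℕ) (hσ : IsSchedule (JO ∪ JN) p σ)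
    (hpres : PreservesOrder JO p π σ)
    (σ₀ : ℕ → ℕ) (hσ₀ : IsSchedule (JO ∪ JN) p σ₀)
    (hσ₀ni : NoIdle (JO ∪ JN) p σ₀)
    (hsameorder : ∀ i ∈ JO ∪ JN, ∀ j ∈ JO ∪ JN, i ≠ j → (σ i < σ j ↔ σ₀ i < σ₀ j)) :
    Dmax JO p π σ₀ ≤ Dmax JO p π σ ∧
    Dsum JO p π σ₀ ≤ Dsum JO p π σ ∧
    Fmax (JO ∪ JN) p f σ₀ ≤ Fmax (JO ∪ JN) p f σ ∧
    Fsum (JO ∪ JN) p f σ₀ ≤ Fsum (JO ∪ JN) p f σ := by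
  have hσ₀σ : ∀ j ∈ JO ∪ JN, σ₀ j + p j ≤ σ j + p j := fun j hj =>
    completion_le_of_noIdle hσ₀ hσ₀ni hσ hj fun i hi hij hle =>
      hσ.completion_le_of_start_lt hi hj hij <| (hsameorder i hi j hj hij).2 <|
        hσ₀.start_lt_of_completion_le hi hj hij (hp i hi) hle
  have hπσ₀ : ∀ j ∈ JO, π j + p j ≤ σ₀ j + p j := fun j hj =>
    completion_le_of_noIdle hπ hπni (hσ₀.mono subset_union_left) hj fun i hi hij hle => by
      have hiU := mem_union_left JN hi
      have hjU := mem_union_left JN hj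
      have hπlt := hπ.completion_lt_of_start_lt hi hj hij (hp j hjU)
        (hπ.start_lt_of_completion_le hi hj hij (hp i hiU) hle)
      have hσlt := hσ.start_lt_of_completion_le hiU hjU hij (hp i hiU)
        (hpres i hi j hj hπlt).le
      exact hσ₀.completion_le_of_start_lt hiU hjU hij ((hsameorder i hiU j hjU hij).1 hσlt)
  refine ⟨sup_mono_fun fun j hj => ?_, sum_le_sum fun j hj => ?_,
    sup_mono_fun fun j hj => ?_, sum_le_sum fun j hj => hreg j hj (hσ₀σ j hj)⟩
  · exact disr_le_disr_of_completion_between (hπσ₀ j hj) (hσ₀σ j (mem_union_left JN hj))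
  · exact disr_le_disr_of_completion_between (hπσ₀ j hj) (hσ₀σ j (mem_union_left JN hj))
  · exact WithBot.coe_le_coe.2 (hreg j hj (hσ₀σ j hj))

/-- Property 3: no inserted idle time is needed when the old-job order is preserved. -/
theorem no_idle_needed_when_order_preserved
    (JO JN : Finset ℕ) (p π : ℕ → ℕ) (f : ℕ → ℕ → ℝ)
    (hdisj : Disjoint JO JN)
    (hp : ∀ j ∈ JO ∪ JN, 0 < p j)
    (hπ : IsSchedule JO p π) (hπni : NoIdle JO p π)
    (hreg : ∀ j ∈ JO ∪ JN, Monotone (f j))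
    (σ : ℕ → ℕ) (hσ : IsSchedule (JO ∪ JN) p σ)
    (hpres : PreservesOrder JO p π σ)
    (σ₀ : ℕ → ℕ) (hσ₀ : IsSchedule (JO ∪ JN) p σ₀)
    (hσ₀ni : NoIdle (JO ∪ JN) p σ₀)
    (hsameorder : ∀ i ∈ JO ∪ JN, ∀ j ∈ JO ∪ JN, i ≠ j → (σ i < σ j ↔ σ₀ i < σ₀ j)) :
    Dmax JO p π σ₀ ≤ Dmax JO p π σ ∧
    Dsum JO p π σ₀ ≤ Dsum JO p π σ ∧
    Fmax (JO ∪ JN) p f σ₀ ≤ Fmax (JO ∪ JN) p f σ ∧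
    Fsum (JO ∪ JN) p f σ₀ ≤ Fsum (JO ∪ JN) p f σ :=
  no_idle_needed_when_order_preserved_general JO JN p π f hp hπ hπni hreg σ hσ hpres σ₀ hσ₀ hσ₀ni
    hsameorder
end

section
/- Proposition (idle time can be necessary for 1|Δmax ≤ ε|ΣU): concrete instance. Consider the instance with old jobs i1 (p = 8, d = 8) and i2 (p = 1, d = 9), initial schedule π* processing i1 on [0,8) and i2 on [8,9), new jobs k and h each with p = 1 and d = 8, and ε = 5. Then (i) there exists a schedule σ of the four jobs with Δmax(σ) ≤ 5 and at most one tardy job, i.e. Ū(σ) ≤ 1 (for example k on [0,1), h on [1,2), i2 on [3,4), i1 on [4,12), which contains inserted idle time on [2,3)); and (ii) every schedule σ' of the four jobs with no inserted idle time and Δmax(σ') ≤ 5 has at least two tardy jobs, i.e. Ū(σ') ≥ 2. -/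
open Finset

/-- Processing times: job 0 = i1 (p = 8), job 1 = i2, jobs 2 = k and 3 = h (p = 1). -/
def pU : ℕ → ℕ := fun j => if j = 0 then 8 else 1

/-- Due dates: d(i1) = 8, d(i2) = 9, d(k) = d(h) = 8. -/
def dU : ℕ → ℤ := fun j => if j = 0 then 8 else if j = 1 then 9 else 8

/-- Initial schedule π*: i1 on [0,8), i2 on [8,9). -/
def piU : ℕ → ℕ := fun j => if j = 0 then 0 else 8

/-- Idle time can be necessary for `1|Δmax ≤ ε|ΣU`: concrete instance with
old jobs `{0, 1}` (= i1, i2), new jobs `{2, 3}` (= k, h) and ε = 5. -/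
theorem idle_necessary_Dmax_nTardy_instance :
    (∃ σ, IsSchedule ({0, 1, 2, 3} : Finset ℕ) pU σ ∧
        Dmax ({0, 1} : Finset ℕ) pU piU σ ≤ 5 ∧
        nTardy ({0, 1, 2, 3} : Finset ℕ) pU dU σ ≤ 1) ∧
    (∀ σ', IsSchedule ({0, 1, 2, 3} : Finset ℕ) pU σ' →
        NoIdle ({0, 1, 2, 3} : Finset ℕ) pU σ' →
        Dmax ({0, 1} : Finset ℕ) pU piU σ' ≤ 5 →
        2 ≤ nTardy ({0, 1, 2, 3} : Finset ℕ) pU dU σ') := by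
  constructor
  · refine ⟨fun j => if j = 0 then 4 else if j = 1 then 3 else if j = 2 then 0 else 1,
      ?_, ?_, ?_⟩
    · intro i hi j hj hij
      fin_cases hi <;> fin_cases hj <;> simp_all [pU]
    · simp [Dmax, disr, pU, piU]
    · simp [nTardy, dU, pU]
      decide
  · intro S hS hNI hD
    have h01 := hS 0 (by decide) 1 (by decide) (by decide)
    have h02 := hS 0 (by decide) 2 (by decide) (by decide)
    have h03 := hS 0 (by decide) 3 (by decide) (by decide)
    have hS0 : S 0 + pU 0 ≤ ∑ i ∈ ({0, 1, 2, 3} : Finset ℕ), pU i :=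
      hNI.1 0 (by decide)
    have hsum : ∑ i ∈ ({0, 1, 2, 3} : Finset ℕ), pU i = 11 := by decide
    rw [hsum] at hS0
    have hd1 : disr pU piU S 1 ≤ 5 := le_trans (Finset.le_sup (by decide)) hD
    have hS1 : 3 ≤ S 1 := by
      simp only [disr] at hd1
      norm_num [pU, piU] at hd1
      omega
    simp only [pU] at h01 h02 h03 hS0
    norm_num at h01 h02 h03 hS0
    rcases Nat.eq_zero_or_pos (S 0) with h0 | h0
    · have h2 : S 0 + 8 ≤ S 2 := by rcases h02 with h | h; exact h; omega
      have h3 : S 0 + 8 ≤ S 3 := by rcases h03 with h | h; exact h; omega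
      have hsub : ({2, 3} : Finset ℕ) ⊆
          ({0, 1, 2, 3} : Finset ℕ).filter fun j => dU j < ((S j + pU j : ℕ) : ℤ) := by
        intro x hx
        simp only [Finset.mem_insert, Finset.mem_singleton] at hx
        rcases hx with rfl | rfl <;>
          simp only [Finset.mem_filter] <;> simp only [dU, pU] <;>
          refine ⟨by decide, ?_⟩ <;> push_cast <;> omega
      calc 2 = ({2, 3} : Finset ℕ).card := by decide
        _ ≤ _ := Finset.card_le_card hsub
      
    · have h1 : S 0 + 8 ≤ S 1 := by rcases h01 with h | h; exact h; omega
      have hsub : ({0, 1} : Finset ℕ) ⊆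
          ({0, 1, 2, 3} : Finset ℕ).filter fun j => dU j < ((S j + pU j : ℕ) : ℤ) := by
        intro x hx
        simp only [Finset.mem_insert, Finset.mem_singleton] at hx
        rcases hx with rfl | rfl <;>
          simp only [Finset.mem_filter] <;> simp only [dU, pU] <;>
          refine ⟨by decide, ?_⟩ <;> push_cast <;> omega
      calc 2 = ({0, 1} : Finset ℕ).card := by decide
        _ ≤ _ := Finset.card_le_card hsub
end

section
/- Proposition (idle time can be necessary for 1|Δmax ≤ ε|ΣT): concrete instance. Consider the instance with old jobs i1 (p = 8, d = 8), i2 (p = 1, d = 9) and ℓ (p = 1, d = 10), initial schedule π* processing i1 on [0,8), i2 on [8,9) and ℓ on [9,10), new jobs k and h each with p = 1 and d = 8, and ε = 5. Then (i) there exists a schedule σ of the five jobs with Δmax(σ) ≤ 5 and total tardiness T̄(σ) = 5 (for example k on [0,1), h on [1,2), i2 on [3,4), ℓ on [4,5), i1 on [5,13), which contains inserted idle time on [2,3)); and (ii) every schedule σ' of the five jobs with no inserted idle time and Δmax(σ') ≤ 5 satisfies T̄(σ') > 5. -/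
open Finset

/-- Processing times: job 0 = i1 (p = 8); jobs 1 = i2, 2 = ℓ, 3 = k, 4 = h (p = 1). -/
def pT10 : ℕ → ℕ := fun j => if j = 0 then 8 else 1

/-- Due dates: d(i1) = 8, d(i2) = 9, d(ℓ) = 10, d(k) = d(h) = 8. -/
def dT10 : ℕ → ℤ := fun j =>
  if j = 0 then 8 else if j = 1 then 9 else if j = 2 then 10 else 8

/-- Initial schedule π*: i1 on [0,8), i2 on [8,9), ℓ on [9,10). -/
def piT10 : ℕ → ℕ := fun j => if j = 0 then 0 else if j = 1 then 8 else 9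

/-- Idle time can be necessary for `1|Δmax ≤ ε|ΣT`: concrete instance with
old jobs `{0, 1, 2}` (= i1, i2, ℓ), new jobs `{3, 4}` (= k, h) and ε = 5. -/
theorem idle_necessary_Dmax_Ttot_instance :
    (∃ σ, IsSchedule ({0, 1, 2, 3, 4} : Finset ℕ) pT10 σ ∧
        Dmax ({0, 1, 2} : Finset ℕ) pT10 piT10 σ ≤ 5 ∧
        Ttot ({0, 1, 2, 3, 4} : Finset ℕ) pT10 dT10 σ = 5) ∧
    (∀ σ', IsSchedule ({0, 1, 2, 3, 4} : Finset ℕ) pT10 σ' →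
        NoIdle ({0, 1, 2, 3, 4} : Finset ℕ) pT10 σ' →
        Dmax ({0, 1, 2} : Finset ℕ) pT10 piT10 σ' ≤ 5 →
        5 < Ttot ({0, 1, 2, 3, 4} : Finset ℕ) pT10 dT10 σ') := by
  constructor
  · refine ⟨fun j => if j = 0 then 5 else if j = 1 then 3 else if j = 2 then 4
      else if j = 3 then 0 else 1, ?_, ?_, ?_⟩
    · unfold IsSchedule; decide
    · decide
    · decide
  · intro σ' hS hNI hD
    have hsum : (∑ i ∈ ({0, 1, 2, 3, 4} : Finset ℕ), pT10 i) = 12 := by decide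
    obtain ⟨hub, -⟩ := hNI
    rw [hsum] at hub
    have h0 : σ' 0 + pT10 0 ≤ 12 := hub 0 (by decide)
    have h1 : σ' 1 + pT10 1 ≤ 12 := hub 1 (by decide)
    have h2 : σ' 2 + pT10 2 ≤ 12 := hub 2 (by decide)
    have h3 : σ' 3 + pT10 3 ≤ 12 := hub 3 (by decide)
    have h4 : σ' 4 + pT10 4 ≤ 12 := hub 4 (by decide)
    norm_num [pT10] at h0 h1 h2 h3 h4
    have hd1 : disr pT10 piT10 σ' 1 ≤ 5 := le_trans (Finset.le_sup (by decide)) hD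
    have hd2 : disr pT10 piT10 σ' 2 ≤ 5 := le_trans (Finset.le_sup (by decide)) hD
    norm_num [disr, pT10, piT10] at hd1 hd2
    have e01 := hS 0 (by decide) 1 (by decide) (by decide)
    have e02 := hS 0 (by decide) 2 (by decide) (by decide)
    have e03 := hS 0 (by decide) 3 (by decide) (by decide)
    have e04 := hS 0 (by decide) 4 (by decide) (by decide)
    have e12 := hS 1 (by decide) 2 (by decide) (by decide)
    have e13 := hS 1 (by decide) 3 (by decide) (by decide)
    have e14 := hS 1 (by decide) 4 (by decide) (by decide)
    have e23 := hS 2 (by decide) 3 (by decide) (by decide)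
    have e24 := hS 2 (by decide) 4 (by decide) (by decide)
    have e34 := hS 3 (by decide) 4 (by decide) (by decide)
    norm_num [pT10] at e01 e02 e03 e04 e12 e13 e14 e23 e24 e34
    have hT : Ttot ({0, 1, 2, 3, 4} : Finset ℕ) pT10 dT10 σ' =
        max 0 ((σ' 0 + 8 : ℕ) - (8:ℤ)) + max 0 ((σ' 1 + 1 : ℕ) - (9:ℤ)) +
        max 0 ((σ' 2 + 1 : ℕ) - (10:ℤ)) + max 0 ((σ' 3 + 1 : ℕ) - (8:ℤ)) +
        max 0 ((σ' 4 + 1 : ℕ) - (8:ℤ)) := by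
      simp [Ttot, Finset.sum_insert, pT10, dT10]
      ring
    rw [hT]
    omega
end

section
/- Theorem 1 (reduction correctness: 2-PARTITION and 1|Δmax ≤ ε, ΣU ≤ 1|−). Let n ≥ 1 and let a_1, …, a_n be positive integers with Σ_{i=1}^n a_i = 2B for a positive integer B. Build the following rescheduling instance: old job i1 with p = 2B+5 and d = 2B+5; old job i2 with p = 1 and d = 2B+6; initial schedule π* processing i1 on [0, 2B+5) and i2 on [2B+5, 2B+6); new jobs j1 and j2 each with p = 1 and d = 2; new jobs g_1, …, g_n with p_{g_i} = a_i and d_{g_i} = 4B+8; and ε = B+3. Then there exists a subset S ⊆ {1, …, n} with Σ_{i∈S} a_i = B if and only if there exists a schedule σ of all n+4 jobs with Δmax(σ) ≤ B+3 and at most one tardy job (Ū(σ) ≤ 1). -/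
open Finset

/-- Processing times of the reduction instance: job 0 = i1 (p = 2B+5), job 1 = i2 (p = 1),
jobs 2 = j1 and 3 = j2 (p = 1), job 4 + i = g_i (p = a_i) for i < n. -/
def p2P (B : ℕ) (a : ℕ → ℕ) : ℕ → ℕ := fun j =>
  if j = 0 then 2 * B + 5 else if j ≤ 3 then 1 else a (j - 4)

/-- Due dates: d(i1) = 2B+5, d(i2) = 2B+6, d(j1) = d(j2) = 2, d(g_i) = 4B+8. -/
def d2P (B : ℕ) : ℕ → ℤ := fun j =>
  if j = 0 then (2 * B + 5 : ℤ) else if j = 1 then (2 * B + 6 : ℤ)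
    else if j ≤ 3 then 2 else (4 * B + 8 : ℤ)

/-- Initial schedule π*: i1 on [0, 2B+5), i2 on [2B+5, 2B+6). -/
def pi2P (B : ℕ) : ℕ → ℕ := fun j => if j = 0 then 0 else 2 * B + 5

lemma pack_le {a : ℕ → ℕ} {T : Finset ℕ} {i j : ℕ} (hi : i ∈ T) (hij : i < j) :
    (∑ k ∈ T.filter (· < i), a k) + a i ≤ ∑ k ∈ T.filter (· < j), a k := by
  have h1 : insert i (T.filter (· < i)) ⊆ T.filter (· < j) := by
    intro x hx
    simp only [mem_insert, mem_filter] at hx ⊢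
    rcases hx with rfl | ⟨hx, hlt⟩
    · exact ⟨hi, hij⟩
    · exact ⟨hx, hlt.trans hij⟩
  calc (∑ k ∈ T.filter (· < i), a k) + a i
      = ∑ k ∈ insert i (T.filter (· < i)), a k := by
        rw [Finset.sum_insert (by simp)]; ring
    _ ≤ _ := Finset.sum_le_sum_of_subset h1

lemma pack_end_le {a : ℕ → ℕ} {T : Finset ℕ} {i : ℕ} (hi : i ∈ T) :
    (∑ k ∈ T.filter (· < i), a k) + a i ≤ ∑ k ∈ T, a k := by
  calc (∑ k ∈ T.filter (· < i), a k) + a i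
      = ∑ k ∈ insert i (T.filter (· < i)), a k := by
        rw [Finset.sum_insert (by simp)]; ring
    _ ≤ _ := Finset.sum_le_sum_of_subset
        (Finset.insert_subset hi (Finset.filter_subset _ _))

lemma packed_sum_le (b s : ℕ → ℕ) (T : Finset ℕ) (L M : ℕ)
    (hd : ∀ i ∈ T, ∀ j ∈ T, i ≠ j → s i + b i ≤ s j ∨ s j + b j ≤ s i)
    (hin : ∀ i ∈ T, L ≤ s i ∧ s i + b i ≤ M) :
    ∑ i ∈ T, b i ≤ M - L := by
  have hdisj : ∀ i ∈ T, ∀ j ∈ T, i ≠ j →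
      Disjoint (Finset.Ico (s i) (s i + b i)) (Finset.Ico (s j) (s j + b j)) := by
    intro i hi j hj hij
    rcases hd i hi j hj hij with h | h <;>
      exact Finset.disjoint_left.2 (by
        intro t ht ht'
        simp only [Finset.mem_Ico] at ht ht'
        omega)
  calc ∑ i ∈ T, b i = ∑ i ∈ T, (Finset.Ico (s i) (s i + b i)).card :=
        Finset.sum_congr rfl (by intro i _; rw [Nat.card_Ico]; omega)
    _ = (T.biUnion fun i => Finset.Ico (s i) (s i + b i)).card :=
        (Finset.card_biUnion hdisj).symm
    _ ≤ (Finset.Ico L M).card := Finset.card_le_card (by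
        intro t ht
        simp only [Finset.mem_biUnion, Finset.mem_Ico] at ht ⊢
        obtain ⟨i, hi, h1, h2⟩ := ht
        have := hin i hi
        omega)
    _ = M - L := Nat.card_Ico L M

lemma p2P_0 (B : ℕ) (a : ℕ → ℕ) : p2P B a 0 = 2 * B + 5 := by simp [p2P]
lemma p2P_1 (B : ℕ) (a : ℕ → ℕ) : p2P B a 1 = 1 := by simp [p2P]
lemma p2P_2 (B : ℕ) (a : ℕ → ℕ) : p2P B a 2 = 1 := by simp [p2P]
lemma p2P_3 (B : ℕ) (a : ℕ → ℕ) : p2P B a 3 = 1 := by simp [p2P]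
lemma p2P_g (B : ℕ) (a : ℕ → ℕ) (i : ℕ) : p2P B a (i + 4) = a i := by
  simp only [p2P]
  have h : i + 4 - 4 = i := by omega
  rw [if_neg (by omega), if_neg (by omega), h]
lemma d2P_0 (B : ℕ) : d2P B 0 = 2 * B + 5 := by simp [d2P]
lemma d2P_1 (B : ℕ) : d2P B 1 = 2 * B + 6 := by simp [d2P]
lemma d2P_2 (B : ℕ) : d2P B 2 = 2 := by simp [d2P]
lemma d2P_3 (B : ℕ) : d2P B 3 = 2 := by simp [d2P]
lemma d2P_g (B : ℕ) (i : ℕ) : d2P B (i + 4) = 4 * B + 8 := by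
  simp only [d2P]
  rw [if_neg (by omega), if_neg (by omega), if_neg (by omega)]

set_option maxHeartbeats 2000000

/-- Theorem 1: 2-PARTITION reduces to `1|Δmax ≤ B+3, ΣU ≤ 1|−`. Old jobs are `{0, 1}`,
new jobs are `{2, 3} ∪ {4 + i : i < n}`, and ε = B + 3. -/
theorem two_partition_reduction
    (n B : ℕ) (a : ℕ → ℕ)
    (hn : 1 ≤ n) (hB : 0 < B)
    (ha : ∀ i ∈ Finset.range n, 0 < a i)
    (hsum : ∑ i ∈ Finset.range n, a i = 2 * B) :
    (∃ S ⊆ Finset.range n, ∑ i ∈ S, a i = B) ↔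
      (∃ σ, IsSchedule
          (({0, 1} : Finset ℕ) ∪ (({2, 3} : Finset ℕ) ∪ (Finset.range n).image (fun i => i + 4)))
          (p2P B a) σ ∧
        Dmax ({0, 1} : Finset ℕ) (p2P B a) (pi2P B) σ ≤ B + 3 ∧
        nTardy
          (({0, 1} : Finset ℕ) ∪ (({2, 3} : Finset ℕ) ∪ (Finset.range n).image (fun i => i + 4)))
          (p2P B a) (d2P B) σ ≤ 1) := by
  set J : Finset ℕ :=
    ({0, 1} : Finset ℕ) ∪ (({2, 3} : Finset ℕ) ∪ (Finset.range n).image (fun i => i + 4)) with hJ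
  have hmem : ∀ j, j ∈ J ↔ j = 0 ∨ j = 1 ∨ j = 2 ∨ j = 3 ∨ ∃ i < n, j = i + 4 := by
    intro j
    simp only [hJ, Finset.mem_union, Finset.mem_insert, Finset.mem_singleton,
      Finset.mem_image, Finset.mem_range]
    constructor
    · rintro ((rfl | rfl) | (rfl | rfl) | ⟨i, hi, rfl⟩) <;> tauto
    · rintro (rfl | rfl | rfl | rfl | ⟨i, hi, rfl⟩) <;> tauto
  have hJ0 : (0 : ℕ) ∈ J := (hmem 0).2 (by tauto)
  have hJ1 : (1 : ℕ) ∈ J := (hmem 1).2 (by tauto)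
  have hJ2 : (2 : ℕ) ∈ J := (hmem 2).2 (by tauto)
  have hJ3 : (3 : ℕ) ∈ J := (hmem 3).2 (by tauto)
  have hJg : ∀ i, i < n → i + 4 ∈ J := fun i hi => (hmem _).2 (by tauto)
  have hp0 := p2P_0 B a
  have hp1 := p2P_1 B a
  have hp2 := p2P_2 B a
  have hp3 := p2P_3 B a
  have q0 : pi2P B 0 = 0 := by simp [pi2P]
  have q1 : pi2P B 1 = 2 * B + 5 := by simp [pi2P]
  constructor
  · -- forward direction
    rintro ⟨S, hS, hSsum⟩
    have hcompl : ∑ i ∈ Finset.range n \ S, a i = B := by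
      have h := Finset.sum_sdiff (f := a) hS
      omega
    set σ : ℕ → ℕ := fun j =>
      if j = 0 then B + 3 else if j = 1 then B + 2 else if j = 2 then 0 else if j = 3 then 1
      else if (j - 4) ∈ S then 2 + ∑ k ∈ S.filter (· < j - 4), a k
      else 3 * B + 8 + ∑ k ∈ (Finset.range n \ S).filter (· < j - 4), a k with hσ
    have e0 : σ 0 = B + 3 := by simp [hσ]
    have e1 : σ 1 = B + 2 := by simp [hσ]
    have e2 : σ 2 = 0 := by simp [hσ]
    have e3 : σ 3 = 1 := by simp [hσ]
    have eS : ∀ i ∈ S, σ (i + 4) = 2 + ∑ k ∈ S.filter (· < i), a k := by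
      intro i hi
      simp only [hσ]
      rw [if_neg (by omega), if_neg (by omega), if_neg (by omega), if_neg (by omega)]
      have h4 : i + 4 - 4 = i := by omega
      rw [h4, if_pos hi]
    have eT : ∀ i, i ∉ S →
        σ (i + 4) = 3 * B + 8 + ∑ k ∈ (Finset.range n \ S).filter (· < i), a k := by
      intro i hi
      simp only [hσ]
      rw [if_neg (by omega), if_neg (by omega), if_neg (by omega), if_neg (by omega)]
      have h4 : i + 4 - 4 = i := by omega
      rw [h4, if_neg hi]
    have hgS : ∀ i ∈ S, 2 ≤ σ (i + 4) ∧ σ (i + 4) + a i ≤ B + 2 := by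
      intro i hi
      rw [eS i hi]
      have := pack_end_le (a := a) hi
      omega
    have hgT : ∀ i, i < n → i ∉ S → 3 * B + 8 ≤ σ (i + 4) ∧ σ (i + 4) + a i ≤ 4 * B + 8 := by
      intro i hi hiS
      rw [eT i hiS]
      have := pack_end_le (a := a) (Finset.mem_sdiff.2 ⟨Finset.mem_range.2 hi, hiS⟩)
      omega
    have hg : ∀ i, i < n → (2 ≤ σ (i + 4) ∧ σ (i + 4) + a i ≤ B + 2) ∨
        (3 * B + 8 ≤ σ (i + 4) ∧ σ (i + 4) + a i ≤ 4 * B + 8) := by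
      intro i hi
      by_cases hiS : i ∈ S
      · exact Or.inl (hgS i hiS)
      · exact Or.inr (hgT i hi hiS)
    have hgg : ∀ i, i < n → ∀ j, j < n → i ≠ j →
        σ (i + 4) + a i ≤ σ (j + 4) ∨ σ (j + 4) + a j ≤ σ (i + 4) := by
      intro i hi j hj hij
      by_cases hiS : i ∈ S <;> by_cases hjS : j ∈ S
      · rcases Nat.lt_or_ge i j with h | h
        · left; rw [eS i hiS, eS j hjS]
          have := pack_le (a := a) hiS h
          omega
        · right; rw [eS i hiS, eS j hjS]
          have := pack_le (a := a) (j := i) hjS (by omega)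
          omega
      · have h1 := hgS i hiS
        have h2 := hgT j hj hjS
        omega
      · have h1 := hgT i hi hiS
        have h2 := hgS j hjS
        omega
      · rcases Nat.lt_or_ge i j with h | h
        · left; rw [eT i hiS, eT j hjS]
          have := pack_le (a := a) (Finset.mem_sdiff.2 ⟨Finset.mem_range.2 hi, hiS⟩) h
          omega
        · right; rw [eT i hiS, eT j hjS]
          have := pack_le (a := a) (j := i) (Finset.mem_sdiff.2 ⟨Finset.mem_range.2 hj, hjS⟩) (by omega)
          omega
    refine ⟨σ, ?_, ?_, ?_⟩
    · intro x hx y hy hne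
      rcases (hmem x).1 hx with rfl | rfl | rfl | rfl | ⟨i, hi, rfl⟩ <;>
        rcases (hmem y).1 hy with rfl | rfl | rfl | rfl | ⟨j, hj, rfl⟩
      all_goals first
        | exact absurd rfl hne
        | (rw [p2P_g, p2P_g]; exact hgg i hi j hj (by omega))
        | (rw [p2P_g]; rcases hg i hi with h | h <;> omega)
        | (rw [p2P_g]; rcases hg j hj with h | h <;> omega)
        | omega
    · simp only [Dmax, Finset.sup_le_iff, Finset.mem_insert, Finset.mem_singleton]
      rintro j (rfl | rfl) <;> simp only [disr] <;> omega
    · have hsub : (J.filter fun j => d2P B j < ((σ j + p2P B a j : ℕ) : ℤ)) ⊆ {0} := by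
        intro j hj
        simp only [Finset.mem_filter] at hj
        obtain ⟨hjJ, htar⟩ := hj
        simp only [Finset.mem_singleton]
        by_contra hne
        rcases (hmem j).1 hjJ with rfl | rfl | rfl | rfl | ⟨i, hi, rfl⟩
        · exact hne rfl
        · rw [d2P_1] at htar; omega
        · rw [d2P_2] at htar; omega
        · rw [d2P_3] at htar; omega
        · rw [d2P_g, p2P_g] at htar
          rcases hg i hi with h | h <;> omega
      calc nTardy J (p2P B a) (d2P B) σ ≤ ({0} : Finset ℕ).card := Finset.card_le_card hsub
        _ = 1 := by simp
  · -- backward direction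
    rintro ⟨σ, hSched, hD, hT⟩
    simp only [nTardy] at hT
    have hd0 : disr (p2P B a) (pi2P B) σ 0 ≤ B + 3 :=
      le_trans (Finset.le_sup (by simp : (0 : ℕ) ∈ ({0, 1} : Finset ℕ))) hD
    have hd1 : disr (p2P B a) (pi2P B) σ 1 ≤ B + 3 :=
      le_trans (Finset.le_sup (by simp : (1 : ℕ) ∈ ({0, 1} : Finset ℕ))) hD
    simp only [disr] at hd0 hd1
    -- job 0 is tardy
    have htardy0 : d2P B 0 < ((σ 0 + p2P B a 0 : ℕ) : ℤ) := by
      rw [d2P_0]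
      by_contra hnot
      have hσ00 : σ 0 = 0 := by omega
      have h2 : σ 0 + p2P B a 0 ≤ σ 2 ∨ σ 2 + p2P B a 2 ≤ σ 0 :=
        hSched 0 hJ0 2 hJ2 (by omega)
      have h3 : σ 0 + p2P B a 0 ≤ σ 3 ∨ σ 3 + p2P B a 3 ≤ σ 0 :=
        hSched 0 hJ0 3 hJ3 (by omega)
      have hσ2 : 2 * B + 5 ≤ σ 2 := by omega
      have hσ3 : 2 * B + 5 ≤ σ 3 := by omega
      have hsub : ({2, 3} : Finset ℕ) ⊆
          J.filter fun j => d2P B j < ((σ j + p2P B a j : ℕ) : ℤ) := by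
        intro x hx
        simp only [Finset.mem_insert, Finset.mem_singleton] at hx
        rcases hx with rfl | rfl <;> rw [Finset.mem_filter]
        · exact ⟨hJ2, by rw [d2P_2]; omega⟩
        · exact ⟨hJ3, by rw [d2P_3]; omega⟩
      have hc := Finset.card_le_card hsub
      rw [Finset.card_insert_of_notMem (by simp), Finset.card_singleton] at hc
      omega
    have h0filter : (0 : ℕ) ∈ J.filter fun j => d2P B j < ((σ j + p2P B a j : ℕ) : ℤ) :=
      Finset.mem_filter.2 ⟨hJ0, htardy0⟩
    have hnt : ∀ j, j ∈ J → j ≠ 0 → ((σ j + p2P B a j : ℕ) : ℤ) ≤ d2P B j := by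
      intro j hj hne
      by_contra hnot
      push_neg at hnot
      have hsub : ({0, j} : Finset ℕ) ⊆
          J.filter fun j => d2P B j < ((σ j + p2P B a j : ℕ) : ℤ) := by
        intro x hx
        simp only [Finset.mem_insert, Finset.mem_singleton] at hx
        rcases hx with rfl | rfl
        · exact h0filter
        · exact Finset.mem_filter.2 ⟨hj, hnot⟩
      have hc := Finset.card_le_card hsub
      rw [Finset.card_insert_of_notMem (by simp [Ne.symm hne]), Finset.card_singleton] at hc
      omega
    have hC1 : σ 1 + 1 ≤ 2 * B + 6 := by
      have h := hnt 1 hJ1 (by omega)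
      rw [d2P_1, hp1] at h
      omega
    have hC2 : σ 2 + 1 ≤ 2 := by
      have h := hnt 2 hJ2 (by omega)
      rw [d2P_2, hp2] at h
      omega
    have hC3 : σ 3 + 1 ≤ 2 := by
      have h := hnt 3 hJ3 (by omega)
      rw [d2P_3, hp3] at h
      omega
    have hCg : ∀ i, i < n → σ (i + 4) + a i ≤ 4 * B + 8 := by
      intro i hi
      have h := hnt (i + 4) (hJg i hi) (by omega)
      rw [d2P_g, p2P_g] at h
      omega
    have s23 : σ 2 + p2P B a 2 ≤ σ 3 ∨ σ 3 + p2P B a 3 ≤ σ 2 :=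
      hSched 2 hJ2 3 hJ3 (by omega)
    have s02 : σ 0 + p2P B a 0 ≤ σ 2 ∨ σ 2 + p2P B a 2 ≤ σ 0 :=
      hSched 0 hJ0 2 hJ2 (by omega)
    have s03 : σ 0 + p2P B a 0 ≤ σ 3 ∨ σ 3 + p2P B a 3 ≤ σ 0 :=
      hSched 0 hJ0 3 hJ3 (by omega)
    have s01 : σ 0 + p2P B a 0 ≤ σ 1 ∨ σ 1 + p2P B a 1 ≤ σ 0 :=
      hSched 0 hJ0 1 hJ1 (by omega)
    rw [d2P_0] at htardy0
    have key : σ 0 = B + 3 ∧ σ 1 = B + 2 := by omega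
    obtain ⟨k0, k1⟩ := key
    set S : Finset ℕ := (Finset.range n).filter (fun i => σ (i + 4) + a i ≤ B + 3) with hSdef
    have hSsub : S ⊆ Finset.range n := Finset.filter_subset _ _
    have hSbnd : ∀ i ∈ S, 2 ≤ σ (i + 4) ∧ σ (i + 4) + a i ≤ B + 2 := by
      intro i hi
      rw [hSdef, Finset.mem_filter, Finset.mem_range] at hi
      obtain ⟨hin, hle⟩ := hi
      have hai := ha i (Finset.mem_range.2 hin)
      have hs1 : σ (i + 4) + p2P B a (i + 4) ≤ σ 1 ∨ σ 1 + p2P B a 1 ≤ σ (i + 4) :=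
        hSched (i + 4) (hJg i hin) 1 hJ1 (by omega)
      have hs2 : σ (i + 4) + p2P B a (i + 4) ≤ σ 2 ∨ σ 2 + p2P B a 2 ≤ σ (i + 4) :=
        hSched (i + 4) (hJg i hin) 2 hJ2 (by omega)
      have hs3 : σ (i + 4) + p2P B a (i + 4) ≤ σ 3 ∨ σ 3 + p2P B a 3 ≤ σ (i + 4) :=
        hSched (i + 4) (hJg i hin) 3 hJ3 (by omega)
      rw [p2P_g] at hs1 hs2 hs3
      omega
    have hTbnd : ∀ i ∈ (Finset.range n).filter (fun i => ¬ (σ (i + 4) + a i ≤ B + 3)),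
        3 * B + 8 ≤ σ (i + 4) ∧ σ (i + 4) + a i ≤ 4 * B + 8 := by
      intro i hi
      rw [Finset.mem_filter, Finset.mem_range] at hi
      obtain ⟨hin, hgt⟩ := hi
      have hs0 : σ (i + 4) + p2P B a (i + 4) ≤ σ 0 ∨ σ 0 + p2P B a 0 ≤ σ (i + 4) :=
        hSched (i + 4) (hJg i hin) 0 hJ0 (by omega)
      rw [p2P_g] at hs0
      exact ⟨by omega, hCg i hin⟩
    have hdisj : ∀ T ⊆ Finset.range n, ∀ i ∈ T, ∀ j ∈ T, i ≠ j →
        σ (i + 4) + a i ≤ σ (j + 4) ∨ σ (j + 4) + a j ≤ σ (i + 4) := by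
      intro T hT i hi j hj hij
      have h := hSched (i + 4) (hJg i (Finset.mem_range.1 (hT hi))) (j + 4)
        (hJg j (Finset.mem_range.1 (hT hj))) (by omega)
      rw [p2P_g, p2P_g] at h
      exact h
    have hsum1 : ∑ i ∈ S, a i ≤ B := by
      have := packed_sum_le a (fun i => σ (i + 4)) S 2 (B + 2)
        (hdisj S hSsub) hSbnd
      omega
    have hsum2 : ∑ i ∈ (Finset.range n).filter (fun i => ¬ (σ (i + 4) + a i ≤ B + 3)), a i ≤ B := by
      have := packed_sum_le a (fun i => σ (i + 4)) _ (3 * B + 8) (4 * B + 8)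
        (hdisj _ (Finset.filter_subset _ _)) hTbnd
      omega
    have htot : ∑ i ∈ S, a i +
        ∑ i ∈ (Finset.range n).filter (fun i => ¬ (σ (i + 4) + a i ≤ B + 3)), a i = 2 * B := by
      rw [hSdef, Finset.sum_filter_add_sum_filter_not, hsum]
    exact ⟨S, hSsub, by omega⟩
end

section
/- Theorem 2, part 1 (reduction correctness: 3-PARTITION and 1|Δ̄ ≤ ε, ΣU ≤ 0|−). Let t ≥ 1 and y ≥ 1 be integers and let a_1, …, a_{3t} be positive integers with Σ_{i=1}^{3t} a_i = t·y. Build the following rescheduling instance with 2t old jobs and 3t new jobs: old short jobs 1, …, t with p = 1 and due date t(2ty+1); old long jobs t+1, …, 2t with p = ty and due date t(2ty+1); new jobs g_1, …, g_{3t} where g_i has processing time t·a_i and due date t²y + t − 1; initial schedule π* in which, for k = 1, …, t, long job t+k occupies [(k−1)(ty+1), (k−1)(ty+1)+ty) and short job k occupies [(k−1)(ty+1)+ty, k(ty+1)) (so C_k(π*) = k(ty+1) and C_{t+k}(π*) = kty + k − 1); and ε = t³y + t(t+1)/2. Then there exists a partition of {1, …, 3t} into t pairwise disjoint subsets S_1,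 …, S_t whose union is {1, …, 3t} with Σ_{i∈S_j} a_i = y for every j, if and only if there exists a schedule σ of all 5t jobs with Δ̄(σ) ≤ ε and no tardy job (C_j(σ) ≤ d_j for every job j, i.e. Ū(σ) = 0). -/
open Finset

/-- Processing times of the reduction instance: old short jobs `1, …, t` have p = 1,
old long jobs `t+1, …, 2t` have p = ty, and new job `2t + i` (= g_i, 1 ≤ i ≤ 3t)
has p = t * a_i. -/
def p3P (t y : ℕ) (a : ℕ → ℕ) : ℕ → ℕ := fun j =>
  if j ≤ t then 1 else if j ≤ 2 * t then t * y else t * a (j - 2 * t)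

/-- Due dates: every old job has due date t(2ty+1), every new job has due date t²y + t − 1. -/
def d3P (t y : ℕ) : ℕ → ℤ := fun j =>
  if j ≤ 2 * t then ((t : ℤ) * (2 * t * y + 1)) else ((t : ℤ) ^ 2 * y + t - 1)

/-- Initial schedule π*: for k = 1, …, t, long job t+k occupies
[(k−1)(ty+1), (k−1)(ty+1)+ty) and short job k occupies [(k−1)(ty+1)+ty, k(ty+1)). -/
def pi3P (t y : ℕ) : ℕ → ℕ := fun j =>
  if j ≤ t then (j - 1) * (t * y + 1) + t * y else (j - t - 1) * (t * y + 1)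

lemma ico_disj {a b c d : ℕ} (h : b ≤ c ∨ d ≤ a) : Disjoint (Ico a b) (Ico c d) := by
  rw [Finset.disjoint_left]; intro x hx hx'; simp [mem_Ico] at hx hx'; omega

lemma IsSchedule.mono_s16 {K K' : Finset ℕ} {p S : ℕ → ℕ} (h : IsSchedule K p S) (hsub : K' ⊆ K) :
    IsSchedule K' p S := fun i hi j hj => h i (hsub hi) j (hsub hj)

lemma IsSchedule.ne_start {K : Finset ℕ} {p S : ℕ → ℕ} (h : IsSchedule K p S)
    (hp : ∀ j ∈ K, 0 < p j) {i j : ℕ} (hi : i ∈ K) (hj : j ∈ K) (hij : i ≠ j) : S i ≠ S j := by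
  intro he
  rcases h i hi j hj hij with h' | h'
  · have := hp i hi; omega
  · have := hp j hj; omega

lemma IsSchedule.seq {K : Finset ℕ} {p S : ℕ → ℕ} (h : IsSchedule K p S)
    {i j : ℕ} (hi : i ∈ K) (hj : j ∈ K) (hij : i ≠ j) (hlt : S i < S j) : S i + p i ≤ S j := by
  rcases h i hi j hj hij with h' | h'
  · exact h'
  · omega

lemma sched_sum_le {K : Finset ℕ} {p S : ℕ → ℕ} (h : IsSchedule K p S) {D : ℕ}
    (hD : ∀ j ∈ K, S j + p j ≤ D) : ∑ i ∈ K, p i ≤ D := by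
  classical
  have hcard : (K.biUnion fun i => Ico (S i) (S i + p i)).card = ∑ i ∈ K, p i := by
    rw [Finset.card_biUnion (fun i hi j hj hij => ico_disj (h i hi j hj hij))]
    simp [Nat.card_Ico]
  have hsub : (K.biUnion fun i => Ico (S i) (S i + p i)) ⊆ Ico 0 D := by
    intro x hx; simp only [Finset.mem_biUnion] at hx
    obtain ⟨i, hi, hx⟩ := hx
    simp only [mem_Ico] at hx ⊢
    exact ⟨Nat.zero_le _, lt_of_lt_of_le hx.2 (hD i hi)⟩
  calc ∑ i ∈ K, p i = _ := hcard.symm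
    _ ≤ (Ico 0 D).card := Finset.card_le_card hsub
    _ = D := by simp

lemma start_eq_sum_before {K : Finset ℕ} {p S : ℕ → ℕ}
    (hp : ∀ j ∈ K, 0 < p j) (h : IsSchedule K p S)
    (hE : ∀ j ∈ K, S j + p j ≤ ∑ i ∈ K, p i) :
    ∀ j ∈ K, S j = ∑ i ∈ K.filter (fun i => S i < S j), p i := by
  classical
  intro j hj
  set B := K.filter (fun i => S i < S j) with hB
  have hBsub : B ⊆ K := filter_subset _ _
  have hBdisj : ∀ i ∈ B, ∀ i' ∈ B, i ≠ i' →
      Disjoint (Ico (S i) (S i + p i)) (Ico (S i') (S i' + p i'))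
    := fun i hi i' hi' hii' => ico_disj (h i (hBsub hi) i' (hBsub hi') hii')
  have hle : ∑ i ∈ B, p i ≤ S j := by
    have hcard : (B.biUnion fun i => Ico (S i) (S i + p i)).card = ∑ i ∈ B, p i := by
      rw [Finset.card_biUnion hBdisj]; simp [Nat.card_Ico]
    have hsub : (B.biUnion fun i => Ico (S i) (S i + p i)) ⊆ Ico 0 (S j) := by
      intro x hx; simp only [Finset.mem_biUnion] at hx
      obtain ⟨i, hi, hx⟩ := hx
      have hiK := hBsub hi
      have hlt : S i < S j := by
        have := hi; rw [hB, mem_filter] at this; exact this.2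
      have hij : i ≠ j := by intro he; subst he; omega
      have := h.seq hiK hj hij hlt
      simp only [mem_Ico] at hx ⊢
      omega
    calc ∑ i ∈ B, p i = _ := hcard.symm
      _ ≤ (Ico 0 (S j)).card := Finset.card_le_card hsub
      _ = S j := by simp
  have hge : S j ≤ ∑ i ∈ B, p i := by
    have hcardU : (K.biUnion fun i => Ico (S i) (S i + p i)).card = ∑ i ∈ K, p i := by
      rw [Finset.card_biUnion (fun i hi i' hi' hii' => ico_disj (h i hi i' hi' hii'))]
      simp [Nat.card_Ico]
    have hsubU : (K.biUnion fun i => Ico (S i) (S i + p i)) ⊆ Ico 0 (∑ i ∈ K, p i) := by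
      intro x hx; simp only [Finset.mem_biUnion] at hx
      obtain ⟨i, hi, hx⟩ := hx
      simp only [mem_Ico] at hx ⊢
      exact ⟨Nat.zero_le _, lt_of_lt_of_le hx.2 (hE i hi)⟩
    have hUeq : (K.biUnion fun i => Ico (S i) (S i + p i)) = Ico 0 (∑ i ∈ K, p i) := by
      apply Finset.eq_of_subset_of_card_le hsubU
      rw [hcardU]; simp
    have hsub2 : Ico 0 (S j) ⊆ B.biUnion fun i => Ico (S i) (S i + p i) := by
      intro x hx
      simp only [mem_Ico] at hx
      have hxU : x ∈ K.biUnion fun i => Ico (S i) (S i + p i) := by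
        rw [hUeq]; simp only [mem_Ico]
        refine ⟨Nat.zero_le _, ?_⟩
        have := hE j hj; have := hp j hj; omega
      simp only [Finset.mem_biUnion] at hxU ⊢
      obtain ⟨i, hi, hxi⟩ := hxU
      simp only [mem_Ico] at hxi
      have hij : i ≠ j := by intro he; subst he; omega
      refine ⟨i, ?_, by simp only [mem_Ico]; omega⟩
      rcases h i hi j hj hij with h' | h'
      · rw [hB, mem_filter]
        have := hp i hi; exact ⟨hi, by omega⟩
      · omega
    calc S j = (Ico 0 (S j)).card := by simp
      _ ≤ (B.biUnion fun i => Ico (S i) (S i + p i)).card := Finset.card_le_card hsub2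
      _ = ∑ i ∈ B, p i := by rw [Finset.card_biUnion hBdisj]; simp [Nat.card_Ico]
  omega

lemma pair_split (A B : Finset ℕ) (f : ℕ → ℕ) (h : ∀ x ∈ A, ∀ b ∈ B, f x ≠ f b) :
    ∑ b ∈ B, (A.filter fun x => f x < f b).card
      + ∑ x ∈ A, (B.filter fun b => f b < f x).card = A.card * B.card := by
  classical
  have h1 : ∑ b ∈ B, (A.filter fun x => f x < f b).card
      = ∑ b ∈ B, ∑ x ∈ A, (if f x < f b then 1 else 0) := by
    refine Finset.sum_congr rfl fun b _ => ?_
    rw [Finset.card_filter]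
  have h2 : ∑ x ∈ A, (B.filter fun b => f b < f x).card
      = ∑ b ∈ B, ∑ x ∈ A, (if f b < f x then 1 else 0) := by
    rw [Finset.sum_comm]
    refine Finset.sum_congr rfl fun x _ => ?_
    rw [Finset.card_filter]
  rw [h1, h2, ← Finset.sum_add_distrib]
  have h3 : ∀ b ∈ B, (∑ x ∈ A, (if f x < f b then 1 else 0))
      + ∑ x ∈ A, (if f b < f x then 1 else 0) = A.card := by
    intro b hb
    rw [← Finset.sum_add_distrib]
    have h4 : ∀ x ∈ A, ((if f x < f b then 1 else 0) + if f b < f x then 1 else 0) = 1 := by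
      intro x hx
      have := h x hx b hb
      split_ifs <;> omega
    rw [Finset.sum_congr rfl h4, Finset.sum_const, smul_eq_mul, mul_one]
  rw [Finset.sum_congr rfl h3, Finset.sum_const, smul_eq_mul]
  ring

lemma sum_rank (K : Finset ℕ) (f : ℕ → ℕ) (hinj : ∀ i ∈ K, ∀ j ∈ K, i ≠ j → f i ≠ f j) :
    2 * ∑ x ∈ K, (K.filter fun z => f z < f x).card = K.card * (K.card - 1) := by
  classical
  have h1 : ∑ x ∈ K, (K.filter fun z => f z < f x).card
      = ∑ x ∈ K, ∑ z ∈ K, (if f z < f x then 1 else 0) := by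
    refine Finset.sum_congr rfl fun x _ => ?_; rw [Finset.card_filter]
  have h2 : ∑ x ∈ K, ∑ z ∈ K, (if f z < f x then 1 else 0)
      = ∑ x ∈ K, ∑ z ∈ K, (if f x < f z then 1 else 0) := by
    rw [Finset.sum_comm]
  have h3 : ∑ x ∈ K, ((∑ z ∈ K, (if f z < f x then 1 else 0))
        + ∑ z ∈ K, (if f x < f z then 1 else 0)) = K.card * (K.card - 1) := by
    have hin : ∀ x ∈ K, (∑ z ∈ K, (if f z < f x then 1 else 0))
        + ∑ z ∈ K, (if f x < f z then 1 else 0) = K.card - 1 := by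
      intro x hx
      rw [← Finset.sum_add_distrib]
      have he : ∀ z ∈ K, ((if f z < f x then 1 else 0) + if f x < f z then 1 else 0)
          = if z = x then 0 else 1 := by
        intro z hz
        by_cases hzx : z = x
        · subst hzx; simp
        · have := hinj z hz x hx hzx
          simp only [if_neg hzx]
          split_ifs <;> omega
      rw [Finset.sum_congr rfl he]
      have ha : ∑ z ∈ K, ((if z = x then (0:ℕ) else 1) + (if z = x then 1 else 0)) = K.card := by
        rw [Finset.sum_congr rfl (fun z _ => by split_ifs <;> rfl), Finset.sum_const,
          smul_eq_mul]; omega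
      have hb : ∑ z ∈ K, (if z = x then (1:ℕ) else 0) = 1 := by
        rw [Finset.sum_ite_eq' K x fun _ => (1:ℕ)]; simp [hx]
      rw [Finset.sum_add_distrib, hb] at ha
      have hc : 1 ≤ K.card := Finset.card_pos.2 ⟨x, hx⟩
      omega
    rw [Finset.sum_congr rfl hin, Finset.sum_const, smul_eq_mul]
  rw [two_mul, h1]
  nth_rewrite 2 [h2]
  rw [← h3]
  exact (Finset.sum_add_distrib).symm

lemma tail_eq_arith (T Y NL NS K : ℤ) (hT1 : 1 ≤ T) (hY : T ≤ T*Y)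
    (hK1 : 1 ≤ K) (hKT : K ≤ T) (hNL : 1 ≤ NL) (hNS : 0 ≤ NS)
    (heq : T*(T*Y) + NS + NL*(T*Y) + 1 - K*(T*Y+1) = NL) : K = T ∧ NS = 0 := by
  have hw1 : (1:ℤ) ≤ T*Y := le_trans hT1 hY
  have p1 : (0:ℤ) ≤ (T-K)*(T*Y-1) := mul_nonneg (by linarith) (by linarith)
  have p2 : (0:ℤ) ≤ (NL-1)*(T*Y-1) := mul_nonneg (by linarith) (by linarith)
  constructor <;> nlinarith [p1, p2]

set_option maxHeartbeats 1600000 in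
lemma reverse_dir (t y : ℕ) (a : ℕ → ℕ)
    (ht : 1 ≤ t) (hy : 1 ≤ y)
    (ha : ∀ i ∈ Finset.Icc 1 (3 * t), 0 < a i)
    (hsum : ∑ i ∈ Finset.Icc 1 (3 * t), a i = t * y)
    (σ : ℕ → ℕ)
    (hsch : IsSchedule (Finset.Icc 1 (2*t) ∪ Finset.Icc (2*t+1) (5*t)) (p3P t y a) σ)
    (hdsum : Dsum (Finset.Icc 1 (2*t)) (p3P t y a) (pi3P t y) σ ≤ t^3*y + t*(t+1)/2)
    (hdl : ∀ j ∈ Finset.Icc 1 (2*t) ∪ Finset.Icc (2*t+1) (5*t),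
      ((σ j + p3P t y a j : ℕ) : ℤ) ≤ d3P t y j) :
    ∃ S : Fin t → Finset ℕ,
        (∀ j k, j ≠ k → Disjoint (S j) (S k)) ∧
        Finset.univ.biUnion S = Finset.Icc 1 (3 * t) ∧
        ∀ j, ∑ i ∈ S j, a i = y := by
  classical
  set p : ℕ → ℕ := p3P t y a with hpdef
  set J : Finset ℕ := Finset.Icc 1 (2*t) ∪ Finset.Icc (2*t+1) (5*t) with hJdef
  set Sh : Finset ℕ := Finset.Icc 1 t with hShdef
  set Lo : Finset ℕ := Finset.Icc (t+1) (2*t) with hLodef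
  set Nw : Finset ℕ := Finset.Icc (2*t+1) (5*t) with hNwdef
  have hShJ : Sh ⊆ J := by
    intro x hx; simp only [hShdef, mem_Icc] at hx
    simp only [hJdef, hNwdef, mem_union, mem_Icc]; omega
  have hLoJ : Lo ⊆ J := by
    intro x hx; simp only [hLodef, mem_Icc] at hx
    simp only [hJdef, hNwdef, mem_union, mem_Icc]; omega
  have hNwJ : Nw ⊆ J := by
    intro x hx; simp only [hNwdef, mem_Icc] at hx
    simp only [hJdef, hNwdef, mem_union, mem_Icc]; omega
  have hpSh : ∀ k ∈ Sh, p k = 1 := by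
    intro k hk; simp only [hShdef, mem_Icc] at hk
    simp only [hpdef, p3P, if_pos hk.2]
  have hpLo : ∀ l ∈ Lo, p l = t*y := by
    intro l hl; simp only [hLodef, mem_Icc] at hl
    simp only [hpdef, p3P, if_neg (show ¬ l ≤ t by omega), if_pos hl.2]
  have hpNw : ∀ g ∈ Nw, p g = t * a (g - 2*t) := by
    intro g hg; simp only [hNwdef, mem_Icc] at hg
    simp only [hpdef, p3P, if_neg (show ¬ g ≤ t by omega), if_neg (show ¬ g ≤ 2*t by omega)]
  have hp : ∀ j ∈ J, 0 < p j := by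
    intro j hj
    simp only [hJdef, hNwdef, mem_union, mem_Icc] at hj
    rcases hj with hj | hj
    · by_cases h1 : j ≤ t
      · rw [hpSh j (by simp only [hShdef, mem_Icc]; omega)]; omega
      · rw [hpLo j (by simp only [hLodef, mem_Icc]; omega)]
        exact Nat.mul_pos (by omega) (by omega)
    · rw [hpNw j (by simp only [hNwdef, mem_Icc]; omega)]
      exact Nat.mul_pos (by omega) (ha _ (by simp only [mem_Icc]; omega))
  -- reindexing of Nw
  have hNwmap : Nw = (Icc 1 (3*t)).map ⟨fun i => 2*t+i, add_right_injective (2*t)⟩ := by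
    ext x
    simp only [hNwdef, mem_Icc, Finset.mem_map, Function.Embedding.coeFn_mk, mem_Icc]
    constructor
    · intro hx; exact ⟨x - 2*t, by omega, by omega⟩
    · rintro ⟨u, hu, rfl⟩; omega
  have hNwsum : ∑ g ∈ Nw, p g = t*(t*y) := by
    rw [hNwmap, Finset.sum_map]
    simp only [Function.Embedding.coeFn_mk]
    have : ∀ i ∈ Icc 1 (3*t), p (2*t+i) = t * a i := by
      intro i hi; simp only [mem_Icc] at hi
      have := hpNw (2*t+i) (by simp only [hNwdef, mem_Icc]; omega)
      rw [show 2*t+i-2*t = i by omega] at this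
      rw [this]
    rw [Finset.sum_congr rfl this, ← Finset.mul_sum, hsum]
  have hJsplit : J = Sh ∪ Lo ∪ Nw := by
    ext x
    simp only [hJdef, hShdef, hLodef, hNwdef, mem_union, mem_Icc]
    omega
  have hdSL : Disjoint Sh Lo := by
    rw [Finset.disjoint_left]; intro x hx hx'
    simp only [hShdef, hLodef, mem_Icc] at hx hx'; omega
  have hdSLN : Disjoint (Sh ∪ Lo) Nw := by
    rw [Finset.disjoint_left]; intro x hx hx'
    simp only [hShdef, hLodef, hNwdef, mem_union, mem_Icc] at hx hx'; omega
  have hcardSh : Sh.card = t := by simp [hShdef, Nat.card_Icc]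
  have hcardLo : Lo.card = t := by simp only [hLodef, Nat.card_Icc]; omega
  have hJsum : ∑ j ∈ J, p j = t + t*(t*y) + t*(t*y) := by
    rw [hJsplit, Finset.sum_union hdSLN, Finset.sum_union hdSL]
    rw [Finset.sum_congr rfl hpSh, Finset.sum_congr rfl hpLo, hNwsum,
      Finset.sum_const, Finset.sum_const, hcardSh, hcardLo, smul_eq_mul, smul_eq_mul]
    ring
  have hwt : t ≤ t*y := by
    calc t = t*1 := by ring
    _ ≤ t*y := Nat.mul_le_mul_left t hy
  have hWw : t*y ≤ t*(t*y) := by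
    calc t*y = 1*(t*y) := by ring
    _ ≤ t*(t*y) := Nat.mul_le_mul_right (t*y) ht
  -- deadlines
  have hdlN : ∀ g ∈ Nw, σ g + p g ≤ t*(t*y) + t - 1 := by
    intro g hg
    have h1 := hdl g (hNwJ hg)
    simp only [hNwdef, mem_Icc] at hg
    rw [hpdef] at h1
    simp only [d3P, if_neg (show ¬ g ≤ 2*t by omega)] at h1
    have h2 : ((t:ℤ)^2*y + t - 1) = ((t*(t*y) + t - 1 : ℕ) : ℤ) := by
      push_cast [Nat.cast_sub (show 1 ≤ t*(t*y) + t by omega)]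
      ring
    rw [h2] at h1
    exact_mod_cast h1
  have hdlO : ∀ j ∈ Sh ∪ Lo, σ j + p j ≤ 2*(t*(t*y)) + t := by
    intro j hj
    have hjJ : j ∈ J := by rw [hJsplit]; exact mem_union_left _ hj
    have h1 := hdl j hjJ
    simp only [mem_union, hShdef, hLodef, mem_Icc] at hj
    rw [hpdef] at h1
    simp only [d3P, if_pos (show j ≤ 2*t by omega)] at h1
    have h2 : ((t:ℤ) * (2*t*y + 1)) = ((2*(t*(t*y)) + t : ℕ) : ℤ) := by push_cast; ring
    rw [h2] at h1
    exact_mod_cast h1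
  have hE : ∀ j ∈ J, σ j + p j ≤ ∑ i ∈ J, p i := by
    intro j hj
    rw [hJsum]
    rw [hJsplit, mem_union] at hj
    rcases hj with hj | hj
    · have := hdlO j hj; omega
    · have := hdlN j hj; omega
  have hstart := start_eq_sum_before hp hsch hE
  have hinj : ∀ i ∈ J, ∀ j ∈ J, i ≠ j → σ i ≠ σ j := fun i hi j hj hij =>
    hsch.ne_start hp hi hj hij
  -- counting functions
  set NS : ℕ → ℕ := fun j => (Sh.filter fun k => σ k < σ j).card with hNSdef
  set NL : ℕ → ℕ := fun j => (Lo.filter fun l => σ l < σ j).card with hNLdef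
  set PN : ℕ → ℕ := fun j => ∑ g ∈ Nw.filter (fun g => σ g < σ j), p g with hPNdef
  have hform : ∀ j ∈ J, σ j = PN j + NS j + NL j * (t*y) := by
    intro j hj
    have h1 := hstart j hj
    rw [hJsplit, filter_union,
      Finset.sum_union (disjoint_filter_filter hdSLN),
      filter_union, Finset.sum_union (disjoint_filter_filter hdSL)] at h1
    have hs : ∑ i ∈ Sh.filter (fun i => σ i < σ j), p i = NS j := by
      rw [Finset.sum_congr rfl (fun k hk => hpSh k (mem_of_mem_filter k hk))]
      simp [hNSdef]
    have hl : ∑ i ∈ Lo.filter (fun i => σ i < σ j), p i = NL j * (t*y) := by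
      rw [Finset.sum_congr rfl (fun k hk => hpLo k (mem_of_mem_filter k hk))]
      simp [hNLdef, mul_comm]
    rw [hs, hl] at h1
    rw [h1, hPNdef]
    ring
  -- long jobs finish late
  have hLoD : ∀ l ∈ Lo, t*(t*y) + t - 1 < σ l + p l := by
    intro l hl
    by_contra hle
    push_neg at hle
    have hlNw : l ∉ Nw := by
      have := hdSLN
      rw [Finset.disjoint_left] at this
      exact this (mem_union_right _ hl)
    have hK : insert l Nw ⊆ J := by
      intro x hx
      rcases Finset.mem_insert.1 hx with rfl | hx
      · exact hLoJ hl
      · exact hNwJ hx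
    have hsch' := hsch.mono_s16 hK
    have hD' : ∀ j ∈ insert l Nw, σ j + p j ≤ t*(t*y) + t - 1 := by
      intro j hj
      rcases Finset.mem_insert.1 hj with rfl | hj
      · exact hle
      · exact hdlN j hj
    have := sched_sum_le hsch' hD'
    rw [Finset.sum_insert hlNw, hNwsum, hpLo l hl] at this
    omega
  -- all new jobs before all long jobs
  have hNwLo : ∀ g ∈ Nw, ∀ l ∈ Lo, σ g < σ l := by
    intro g hg l hl
    have hne : g ≠ l := by
      simp only [hNwdef, mem_Icc] at hg; simp only [hLodef, mem_Icc] at hl; omega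
    rcases Nat.lt_or_ge (σ g) (σ l) with h | h
    · exact h
    have hne2 : σ l ≠ σ g := hinj l (hLoJ hl) g (hNwJ hg) hne.symm
    have hlt : σ l < σ g := by omega
    have := hsch.seq (hLoJ hl) (hNwJ hg) hne.symm hlt
    have h2 := hdlN g hg
    have h3 := hLoD l hl
    have := hp g (hNwJ hg)
    omega
  have hPNLo : ∀ l ∈ Lo, PN l = t*(t*y) := by
    intro l hl
    simp only [hPNdef]
    rw [Finset.filter_true_of_mem (fun g hg => hNwLo g hg l hl)]
    exact hNwsum
  -- front shorts
  set F : Finset ℕ := Sh.filter (fun k => σ k + p k ≤ t*(t*y) + t - 1) with hFdef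
  have hFSh : F ⊆ Sh := filter_subset _ _
  have hmF : F.card + t*(t*y) ≤ t*(t*y) + t - 1 := by
    have hdNF : Disjoint Nw F := by
      rw [Finset.disjoint_left]; intro x hx hx'
      have := hFSh hx'
      rw [Finset.disjoint_left] at hdSLN
      exact hdSLN (mem_union_left _ this) hx
    have hK : Nw ∪ F ⊆ J := union_subset hNwJ (fun x hx => hShJ (hFSh hx))
    have hsch' := hsch.mono_s16 hK
    have hD' : ∀ j ∈ Nw ∪ F, σ j + p j ≤ t*(t*y) + t - 1 := by
      intro j hj
      rcases Finset.mem_union.1 hj with hj | hj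
      · exact hdlN j hj
      · rw [hFdef, mem_filter] at hj; exact hj.2
    have := sched_sum_le hsch' hD'
    rw [Finset.sum_union hdNF, hNwsum] at this
    have hFsum : ∑ i ∈ F, p i = F.card := by
      rw [Finset.sum_congr rfl (fun k hk => hpSh k (hFSh hk))]
      simp
    omega
  have hmlt : F.card ≤ t - 1 := by omega
  have hNLF : ∀ k ∈ F, NL k = 0 := by
    intro k hk
    simp only [hNLdef]
    rw [Finset.card_eq_zero, Finset.filter_eq_empty_iff]
    intro l hl hlt
    have hne : l ≠ k := by
      have := hFSh hk
      simp only [hShdef, mem_Icc] at this; simp only [hLodef, mem_Icc] at hl; omega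
    have h1 := hsch.seq (hLoJ hl) (hShJ (hFSh hk)) hne hlt
    have h2 : σ k + p k ≤ t*(t*y) + t - 1 := by
      rw [hFdef, mem_filter] at hk; exact hk.2
    have h3 := hLoD l hl
    have := hp k (hShJ (hFSh hk))
    omega
  -- tail shorts: all new before them
  have htailnew : ∀ k ∈ Sh, k ∉ F → ∀ g ∈ Nw, σ g < σ k := by
    intro k hk hkF g hg
    have hDk : ¬ (σ k + p k ≤ t*(t*y) + t - 1) := by
      intro hc; exact hkF (by rw [hFdef, mem_filter]; exact ⟨hk, hc⟩)
    have hne : k ≠ g := by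
      simp only [hShdef, mem_Icc] at hk; simp only [hNwdef, mem_Icc] at hg; omega
    rcases Nat.lt_or_ge (σ g) (σ k) with h | h
    · exact h
    have hne2 : σ k ≠ σ g := hinj k (hShJ hk) g (hNwJ hg) hne
    have hlt : σ k < σ g := by omega
    have := hsch.seq (hShJ hk) (hNwJ hg) hne hlt
    have h2 := hdlN g hg
    have := hp k (hShJ hk)
    omega
  have hPNtail : ∀ k ∈ Sh, k ∉ F → PN k = t*(t*y) := by
    intro k hk hkF
    simp only [hPNdef]
    rw [Finset.filter_true_of_mem (fun g hg => htailnew k hk hkF g hg)]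
    exact hNwsum
  -- rank and pair sums
  have hinjLo : ∀ i ∈ Lo, ∀ j ∈ Lo, i ≠ j → σ i ≠ σ j :=
    fun i hi j hj hij => hinj i (hLoJ hi) j (hLoJ hj) hij
  have hrank : 2 * ∑ l ∈ Lo, NL l = t * (t-1) := by
    have h := sum_rank Lo σ hinjLo
    rw [hcardLo] at h
    simpa only [hNLdef] using h
  have hpairs : ∑ l ∈ Lo, NS l + ∑ k ∈ Sh, NL k = t * t := by
    have hne : ∀ k ∈ Sh, ∀ l ∈ Lo, σ k ≠ σ l := by
      intro k hk l hl
      refine hinj k (hShJ hk) l (hLoJ hl) ?_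
      simp only [hShdef, mem_Icc] at hk; simp only [hLodef, mem_Icc] at hl; omega
    have h := pair_split Sh Lo σ hne
    rw [hcardSh, hcardLo] at h
    simpa only [hNSdef, hNLdef] using h
  -- sums of completion times over Lo
  have hLomap : Lo = (range t).map ⟨fun u => t+1+u, add_right_injective (t+1)⟩ := by
    ext x
    simp only [hLodef, mem_Icc, Finset.mem_map, Finset.mem_range, Function.Embedding.coeFn_mk]
    constructor
    · intro hx; exact ⟨x - (t+1), by omega, by omega⟩
    · rintro ⟨u, hu, rfl⟩; omega
  have hπLo : ∀ u, u < t → pi3P t y (t+1+u) + p (t+1+u) = u*(t*y+1) + t*y := by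
    intro u hu
    have h1 : pi3P t y (t+1+u) = u*(t*y+1) := by
      simp only [pi3P, if_neg (show ¬ t+1+u ≤ t by omega)]
      rw [show t+1+u-t-1 = u by omega]
    rw [h1, hpLo (t+1+u) (by simp only [hLodef, mem_Icc]; omega)]
  have hCpiLoN : ∑ l ∈ Lo, (pi3P t y l + p l)
      = (∑ u ∈ range t, u)*(t*y+1) + t*(t*y) := by
    rw [hLomap, Finset.sum_map]
    simp only [Function.Embedding.coeFn_mk]
    have hc : ∀ u ∈ range t, pi3P t y (t+1+u) + p (t+1+u) = u*(t*y+1) + t*y := by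
      intro u hu
      simp only [mem_range] at hu
      exact hπLo u hu
    rw [Finset.sum_congr rfl hc, Finset.sum_add_distrib, ← Finset.sum_mul,
      Finset.sum_const, Finset.card_range, smul_eq_mul]
  have hCsh : ∀ k ∈ Sh, σ k + p k = PN k + NS k + NL k * (t*y) + 1 := by
    intro k hk
    rw [hform k (hShJ hk), hpSh k hk]
  have hCLo : ∀ l ∈ Lo, σ l + p l = t*(t*y) + NS l + NL l * (t*y) + t*y := by
    intro l hl
    rw [hform l (hLoJ hl), hpLo l hl, hPNLo l hl]
  have hsumCLoN : ∑ l ∈ Lo, (σ l + p l)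
      = t*(t*(t*y)) + (∑ l ∈ Lo, NS l) + (∑ l ∈ Lo, NL l)*(t*y) + t*(t*y) := by
    rw [Finset.sum_congr rfl hCLo, Finset.sum_add_distrib, Finset.sum_add_distrib,
      Finset.sum_add_distrib, Finset.sum_const, Finset.sum_const,
      hcardLo, smul_eq_mul, smul_eq_mul, Finset.sum_mul]
  -- the budget inequality
  have hbudget : ∑ k ∈ Sh, disr p (pi3P t y) σ k + ∑ l ∈ Lo, NS l ≤ t*t := by
    have hds : ∑ k ∈ Sh, disr p (pi3P t y) σ k + ∑ l ∈ Lo, disr p (pi3P t y) σ l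
        ≤ t^3*y + t*(t+1)/2 := by
      have h := hdsum
      rw [Dsum, show Finset.Icc 1 (2*t) = Sh ∪ Lo from by
        ext x; simp only [hShdef, hLodef, mem_Icc, mem_union]; omega,
        Finset.sum_union hdSL] at h
      exact h
    have h1 : ((∑ l ∈ Lo, (σ l + p l) : ℕ) : ℤ) - ((∑ l ∈ Lo, (pi3P t y l + p l) : ℕ) : ℤ)
        ≤ ((∑ l ∈ Lo, disr p (pi3P t y) σ l : ℕ) : ℤ) := by
      push_cast
      rw [← Finset.sum_sub_distrib]
      refine Finset.sum_le_sum (fun l hl => ?_)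
      exact Int.le_natAbs
    rw [hsumCLoN, hCpiLoN] at h1
    have h2 : ((∑ k ∈ Sh, disr p (pi3P t y) σ k : ℕ) : ℤ)
        + ((∑ l ∈ Lo, disr p (pi3P t y) σ l : ℕ) : ℤ)
        ≤ ((t^3*y : ℕ) : ℤ) + ((t*(t+1)/2 : ℕ) : ℤ) := by
      exact_mod_cast hds
    -- arithmetic facts
    have hT2 : t*(t+1)/2 * 2 = t*(t+1) :=
      Nat.div_mul_cancel (Nat.even_mul_succ_self t).two_dvd
    have hRid : (∑ u ∈ range t, u) * 2 = t*(t-1) := Finset.sum_range_id_mul_two t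
    have hNLR : ∑ l ∈ Lo, NL l = ∑ u ∈ range t, u := by omega
    have hiden : t*(t+1) + t*(t-1) = 2*(t*t) := by
      obtain ⟨s, rfl⟩ : ∃ s, t = s+1 := ⟨t-1, by omega⟩
      simp only [Nat.add_sub_cancel]
      ring
    have hTR : (t*(t+1)/2) + (∑ u ∈ range t, u) = t*t := by omega
    have hcTR : ((t*(t+1)/2 : ℕ) : ℤ) + ((∑ u ∈ range t, u : ℕ) : ℤ) = ((t*t:ℕ):ℤ) := by
      exact_mod_cast hTR
    rw [hNLR] at h1
    have h3 : ((∑ k ∈ Sh, disr p (pi3P t y) σ k : ℕ) : ℤ) + ((∑ l ∈ Lo, NS l : ℕ) : ℤ)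
        ≤ ((t*t : ℕ) : ℤ) := by
      push_cast at h1 h2 hcTR ⊢
      linarith [h1, h2, hcTR]
    exact_mod_cast h3
  -- per-short lower bound
  have hNSlt : ∀ k ∈ Sh, NS k ≤ t - 1 := by
    intro k hk
    have hsub : Sh.filter (fun k' => σ k' < σ k) ⊆ Sh.erase k := by
      intro x hx
      rw [mem_filter] at hx
      rw [Finset.mem_erase]
      refine ⟨?_, hx.1⟩
      intro he; subst he; exact lt_irrefl _ hx.2
    have := Finset.card_le_card hsub
    rw [Finset.card_erase_of_mem hk, hcardSh] at this
    simpa only [hNSdef] using this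
  have hπSh : ∀ k ∈ Sh, pi3P t y k + p k = k * (t*y+1) := by
    intro k hk
    have hk' := hk
    simp only [hShdef, mem_Icc] at hk'
    obtain ⟨u, rfl⟩ : ∃ u, k = u+1 := ⟨k-1, by omega⟩
    rw [hpSh _ hk]
    simp only [pi3P, if_pos (show u+1 ≤ t by omega), Nat.add_sub_cancel]
    ring
  have hXle : ∀ k ∈ Sh, k ∉ F → 1 ≤ NL k →
      (NL k : ℤ) ≤ ((σ k + p k : ℕ):ℤ) - ((pi3P t y k + p k : ℕ):ℤ) := by
    intro k hk hkF hNL1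
    have hk' := hk
    simp only [hShdef, mem_Icc] at hk'
    rw [hCsh k hk, hPNtail k hk hkF, hπSh k hk]
    push_cast
    have hw : (t:ℤ) ≤ (t:ℤ)*y := by exact_mod_cast hwt
    have hkt : (k:ℤ) ≤ t := by exact_mod_cast hk'.2
    have hk1 : (1:ℤ) ≤ k := by exact_mod_cast hk'.1
    have hNL1' : (1:ℤ) ≤ (NL k : ℤ) := by exact_mod_cast hNL1
    have hNS0 : (0:ℤ) ≤ (NS k : ℤ) := Int.natCast_nonneg _
    nlinarith [mul_nonneg (show (0:ℤ) ≤ (t:ℤ) - k by omega) (show (0:ℤ) ≤ (t:ℤ)*y by nlinarith),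
      mul_nonneg (show (0:ℤ) ≤ (NL k:ℤ) - 1 by omega) (show (0:ℤ) ≤ (t:ℤ)*y - 1 by nlinarith)]
  have hdisrAbs : ∀ k, ((σ k + p k : ℕ):ℤ) - ((pi3P t y k + p k : ℕ):ℤ)
      ≤ (disr p (pi3P t y) σ k : ℤ) := by
    intro k
    exact Int.le_natAbs
  have hperk : ∀ k ∈ Sh, NL k ≤ disr p (pi3P t y) σ k := by
    intro k hk
    by_cases hkF : k ∈ F
    · rw [hNLF k hkF]; exact Nat.zero_le _
    · by_cases h0 : NL k = 0
      · rw [h0]; exact Nat.zero_le _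
      · have h1 := hXle k hk hkF (by omega)
        have h2 := hdisrAbs k
        have : (NL k : ℤ) ≤ (disr p (pi3P t y) σ k : ℤ) := le_trans h1 h2
        exact_mod_cast this
  have heqk : ∀ k ∈ Sh, disr p (pi3P t y) σ k = NL k := by
    have hle1 : ∑ k ∈ Sh, NL k ≤ ∑ k ∈ Sh, disr p (pi3P t y) σ k :=
      Finset.sum_le_sum hperk
    have hle2 : ∑ k ∈ Sh, disr p (pi3P t y) σ k ≤ ∑ k ∈ Sh, NL k := by omega
    have heq : ∑ k ∈ Sh, NL k = ∑ k ∈ Sh, disr p (pi3P t y) σ k := le_antisymm hle1 hle2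
    intro k hk
    exact ((Finset.sum_eq_sum_iff_of_le hperk).1 heq k hk).symm
  -- front shorts sit exactly at their original completion times
  have hfrontC : ∀ k ∈ F, σ k + p k = k * (t*y+1) := by
    intro k hkF
    have hk := hFSh hkF
    have h0 : disr p (pi3P t y) σ k = 0 := by rw [heqk k hk, hNLF k hkF]
    have h1 : ((σ k + p k : ℕ):ℤ) = ((pi3P t y k + p k : ℕ):ℤ) := by
      have := h0
      rw [disr] at this
      have h2 := Int.natAbs_eq_zero.1 this
      omega
    have h2 : σ k + p k = pi3P t y k + p k := by exact_mod_cast h1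
    rw [h2, hπSh k hk]
  have hkleF : ∀ k ∈ F, k ≤ t - 1 := by
    intro k hkF
    have hk := hFSh hkF
    have hk' := hk
    simp only [hShdef, mem_Icc] at hk'
    have hCle : σ k + p k ≤ t*(t*y) + t - 1 := by
      rw [hFdef, mem_filter] at hkF; exact hkF.2
    rw [hfrontC k hkF] at hCle
    by_contra hc
    have hkt : k = t := by omega
    have hh : t*(t*y+1) = t*(t*y) + t := by ring
    rw [hkt] at hCle
    omega
  have hdvdPN : ∀ j, t ∣ PN j := by
    intro j
    simp only [hPNdef]
    refine Finset.dvd_sum (fun g hg => ?_)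
    rw [hpNw g (mem_of_mem_filter g hg)]
    exact Dvd.intro _ rfl
  have hfrontNS : ∀ k ∈ F, NS k = k - 1 ∧ PN k = t*(k*y) := by
    intro k hkF
    have hk := hFSh hkF
    have hk' := hk
    simp only [hShdef, mem_Icc] at hk'
    have h1 : PN k + NS k + NL k * (t*y) + 1 = k*(t*y+1) := by
      rw [← hCsh k hk, hfrontC k hkF]
    rw [hNLF k hkF] at h1
    obtain ⟨c, hc⟩ := hdvdPN k
    have hkw : k*(t*y+1) = t*(k*y) + k := by ring
    have h2 : t*c + (NS k + 1) = t*(k*y) + k := by omega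
    have hNSk := hNSlt k hk
    -- mod t argument
    have h3 : (t*c + (NS k + 1)) % t = (NS k + 1) % t := Nat.mul_add_mod t c (NS k + 1)
    have h4 : (t*(k*y) + k) % t = k % t := Nat.mul_add_mod t (k*y) k
    have h5 : (NS k + 1) % t = k % t := by rw [← h3, h2, h4]
    have h6 : NS k + 1 = k := by
      by_cases hA : NS k + 1 = t
      · by_cases hB : k = t
        · omega
        · rw [hA, Nat.mod_self, Nat.mod_eq_of_lt (by omega : k < t)] at h5
          omega
      · have hA' : NS k + 1 < t := by omega
        rw [Nat.mod_eq_of_lt hA'] at h5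
        by_cases hB : k = t
        · rw [hB, Nat.mod_self] at h5
          omega
        · rw [Nat.mod_eq_of_lt (by omega : k < t)] at h5
          omega
    constructor
    · omega
    · omega
  -- classification of tail shorts
  have htc : ∀ k ∈ Sh, k ∉ F → (NL k = 0 ∧ NS k = t-1) ∨ (k = t ∧ NS k = 0 ∧ 1 ≤ NL k) := by
    intro k hk hkF
    have hk' := hk
    simp only [hShdef, mem_Icc] at hk'
    have hPN := hPNtail k hk hkF
    have hCgt : t*(t*y) + t - 1 < σ k + p k := by
      by_contra hc
      push_neg at hc
      exact hkF (by rw [hFdef, mem_filter]; exact ⟨hk, hc⟩)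
    by_cases h0 : NL k = 0
    · left
      refine ⟨h0, ?_⟩
      have h1 := hCsh k hk
      rw [hPN, h0] at h1
      have h2 := hNSlt k hk
      omega
    · right
      have hNL1 : 1 ≤ NL k := by omega
      have heq := heqk k hk
      -- X = NL k exactly
      have hX1 := hXle k hk hkF hNL1
      have hX2 : ((σ k + p k : ℕ):ℤ) - ((pi3P t y k + p k : ℕ):ℤ) ≤ (NL k : ℤ) := by
        rw [← heq, disr]
        exact Int.le_natAbs
      have hXeq : ((σ k + p k : ℕ):ℤ) - ((pi3P t y k + p k : ℕ):ℤ) = (NL k : ℤ) :=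
        le_antisymm hX2 hX1
      rw [hCsh k hk, hPN, hπSh k hk] at hXeq
      -- now pure integer arithmetic
      have hw : (t:ℤ) ≤ (t:ℤ)*y := by exact_mod_cast hwt
      have hkt : (k:ℤ) ≤ t := by exact_mod_cast hk'.2
      have hk1 : (1:ℤ) ≤ k := by exact_mod_cast hk'.1
      have hNL1' : (1:ℤ) ≤ (NL k : ℤ) := by exact_mod_cast hNL1
      have hNS0 : (0:ℤ) ≤ (NS k : ℤ) := Int.natCast_nonneg _
      push_cast at hXeq
      -- derive k = t and NS k = 0
      have ht' : (1:ℤ) ≤ (t:ℤ) := by exact_mod_cast ht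
      have hkt2 := tail_eq_arith (t:ℤ) (y:ℤ) (NL k) (NS k) (k:ℤ) ht' hw hk1 hkt hNL1' hNS0
        (by linarith [hXeq])
      have : k = t := by exact_mod_cast hkt2.1
      have : NS k = 0 := by exact_mod_cast hkt2.2
      exact ⟨by assumption, by assumption, hNL1⟩
  -- NS k = t-1 means every other short job is before k
  have hNSfull : ∀ k ∈ Sh, NS k = t-1 → ∀ k' ∈ Sh, k' ≠ k → σ k' < σ k := by
    intro k hk hNSk k' hk' hne
    have hsub : Sh.filter (fun x => σ x < σ k) ⊆ Sh.erase k := by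
      intro x hx
      rw [mem_filter] at hx
      rw [Finset.mem_erase]
      exact ⟨fun he => by subst he; exact lt_irrefl _ hx.2, hx.1⟩
    have hcards : (Sh.erase k).card ≤ (Sh.filter (fun x => σ x < σ k)).card := by
      rw [Finset.card_erase_of_mem hk, hcardSh]
      have : (Sh.filter (fun x => σ x < σ k)).card = NS k := by simp only [hNSdef]
      omega
    have heqf : Sh.filter (fun x => σ x < σ k) = Sh.erase k :=
      Finset.eq_of_subset_of_card_le hsub hcards
    have : k' ∈ Sh.filter (fun x => σ x < σ k) := by
      rw [heqf, Finset.mem_erase]; exact ⟨hne, hk'⟩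
    rw [mem_filter] at this
    exact this.2
  have huniq : ∀ k1 ∈ Sh, ∀ k2 ∈ Sh, k1 ∉ F → k2 ∉ F → k1 = k2 := by
    intro k1 hk1 k2 hk2 hF1 hF2
    by_contra hne
    have hAB : ∀ ka ∈ Sh, ∀ kb ∈ Sh, ka ≠ kb → (NL ka = 0 ∧ NS ka = t-1) →
        (kb = t ∧ NS kb = 0 ∧ 1 ≤ NL kb) → False := by
      intro ka hka kb hkb hnab hA hB
      obtain ⟨l, hl⟩ := Finset.card_pos.1 (show 0 < (Lo.filter fun l => σ l < σ kb).card from by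
        have : (Lo.filter fun l => σ l < σ kb).card = NL kb := by simp only [hNLdef]
        omega)
      rw [mem_filter] at hl
      have hba : σ kb < σ ka := hNSfull ka hka hA.2 kb hkb (Ne.symm hnab)
      have hlka : l ∈ Lo.filter fun l' => σ l' < σ ka := by
        rw [mem_filter]; exact ⟨hl.1, lt_trans hl.2 hba⟩
      have : 0 < NL ka := by
        have h2 : (Lo.filter fun l' => σ l' < σ ka).card = NL ka := by simp only [hNLdef]
        have := Finset.card_pos.2 ⟨l, hlka⟩
        omega
      omega
    rcases htc k1 hk1 hF1 with hA1 | hB1 <;> rcases htc k2 hk2 hF2 with hA2 | hB2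
    · have h12 := hNSfull k1 hk1 hA1.2 k2 hk2 (Ne.symm hne)
      have h21 := hNSfull k2 hk2 hA2.2 k1 hk1 hne
      omega
    · exact hAB k1 hk1 k2 hk2 hne hA1 hB2
    · exact hAB k2 hk2 k1 hk1 (Ne.symm hne) hA2 hB1
    · exact hne (hB1.1.trans hB2.1.symm)
  have hcardF : F.card = t - 1 := by
    by_contra hc
    have hsd : (Sh \ F).card = t - F.card := by
      rw [Finset.card_sdiff_of_subset hFSh, hcardSh]
    have h2 : 2 ≤ (Sh \ F).card := by omega
    obtain ⟨x, hx, b, hb, hxb⟩ := Finset.one_lt_card.1 h2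
    rw [Finset.mem_sdiff] at hx hb
    exact hxb (huniq x hx.1 b hb.1 hx.2 hb.2)
  have hFeq : F = Icc 1 (t-1) := by
    refine Finset.eq_of_subset_of_card_le ?_ ?_
    · intro k hkF
      have hk := hFSh hkF
      simp only [hShdef, mem_Icc] at hk
      simp only [mem_Icc]
      exact ⟨hk.1, hkleF k hkF⟩
    · rw [Nat.card_Icc, hcardF]
      omega
  have htF : t ∉ F := by
    rw [hFeq]; simp only [mem_Icc]; omega
  have htSh : t ∈ Sh := by simp only [hShdef, mem_Icc]; omega
  have hnewbt : ∀ g ∈ Nw, σ g < σ t := htailnew t htSh htF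
  -- group-counting function
  set W : ℕ → ℕ := fun i => NS (2*t+i) with hWdef
  have hgNw : ∀ i ∈ Icc 1 (3*t), 2*t+i ∈ Nw := by
    intro i hi
    simp only [mem_Icc] at hi
    simp only [hNwdef, mem_Icc]; omega
  have hWlt : ∀ i ∈ Icc 1 (3*t), W i ≤ t - 1 := by
    intro i hi
    have hsub : Sh.filter (fun k => σ k < σ (2*t+i)) ⊆ Sh.erase t := by
      intro x hx
      rw [mem_filter] at hx
      rw [Finset.mem_erase]
      refine ⟨?_, hx.1⟩
      intro he; subst he
      exact absurd (lt_trans hx.2 (hnewbt _ (hgNw i hi))) (lt_irrefl _)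
    have := Finset.card_le_card hsub
    rw [Finset.card_erase_of_mem htSh, hcardSh] at this
    simpa only [hWdef, hNSdef] using this
  -- the filter condition
  have hmemQ : ∀ k, 1 ≤ k → k ≤ t-1 → ∀ i ∈ Icc 1 (3*t), (σ (2*t+i) < σ k ↔ W i < k) := by
    intro k hk1 hkt i hi
    have hkF : k ∈ F := by rw [hFeq]; simp only [mem_Icc]; omega
    have hkSh : k ∈ Sh := hFSh hkF
    have hNSk : NS k = k - 1 := (hfrontNS k hkF).1
    have hne : k ≠ 2*t+i := by
      simp only [mem_Icc] at hi
      simp only [hShdef, mem_Icc] at hkSh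
      omega
    constructor
    · intro hlt
      have hsub : Sh.filter (fun x => σ x < σ (2*t+i)) ⊆ Sh.filter (fun x => σ x < σ k) := by
        intro x hx
        rw [mem_filter] at hx ⊢
        exact ⟨hx.1, lt_trans hx.2 hlt⟩
      have := Finset.card_le_card hsub
      have e1 : (Sh.filter (fun x => σ x < σ (2*t+i))).card = W i := by
        simp only [hWdef, hNSdef]
      have e2 : (Sh.filter (fun x => σ x < σ k)).card = NS k := by simp only [hNSdef]
      omega
    · intro hWk
      by_contra hge
      push_neg at hge
      have hne2 : σ k ≠ σ (2*t+i) := hinj k (hShJ hkSh) (2*t+i) (hNwJ (hgNw i hi)) hne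
      have hlt : σ k < σ (2*t+i) := by omega
      have hknotmem : k ∉ Sh.filter (fun x => σ x < σ k) := by
        rw [mem_filter]
        rintro ⟨-, h⟩; exact lt_irrefl _ h
      have hsub : insert k (Sh.filter (fun x => σ x < σ k))
          ⊆ Sh.filter (fun x => σ x < σ (2*t+i)) := by
        intro x hx
        rcases Finset.mem_insert.1 hx with rfl | hx
        · rw [mem_filter]; exact ⟨hkSh, hlt⟩
        · rw [mem_filter] at hx ⊢
          exact ⟨hx.1, lt_trans hx.2 hlt⟩
      have := Finset.card_le_card hsub
      rw [Finset.card_insert_of_notMem hknotmem] at this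
      have e1 : (Sh.filter (fun x => σ x < σ (2*t+i))).card = W i := by
        simp only [hWdef, hNSdef]
      have e2 : (Sh.filter (fun x => σ x < σ k)).card = NS k := by simp only [hNSdef]
      omega
  -- prefix sums of group weights
  have hQ : ∀ k, 1 ≤ k → k ≤ t → ∑ i ∈ (Icc 1 (3*t)).filter (fun i => W i < k), a i = k*y := by
    intro k hk1 hkt
    by_cases hkt' : k = t
    · subst hkt'
      rw [Finset.filter_true_of_mem (fun i hi => by have := hWlt i hi; omega)]
      rw [hsum]
    · have hkF : k ∈ F := by rw [hFeq]; simp only [mem_Icc]; omega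
      have hkSh : k ∈ Sh := hFSh hkF
      have hPNk : PN k = t*(k*y) := (hfrontNS k hkF).2
      have hPN2 : PN k = ∑ i ∈ (Icc 1 (3*t)).filter (fun i => σ (2*t+i) < σ k), t * a i := by
        simp only [hPNdef]
        rw [hNwmap, Finset.filter_map, Finset.sum_map]
        simp only [Function.Embedding.coeFn_mk]
        refine Finset.sum_congr rfl (fun i hi => ?_)
        have hiIcc : i ∈ Icc 1 (3*t) := mem_of_mem_filter i hi
        rw [hpNw (2*t+i) (hgNw i hiIcc), show 2*t+i-2*t = i by omega]
      have hfc : (Icc 1 (3*t)).filter (fun i => σ (2*t+i) < σ k)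
          = (Icc 1 (3*t)).filter (fun i => W i < k) := by
        refine Finset.filter_congr (fun i hi => ?_)
        exact hmemQ k hk1 (by omega) i hi
      rw [hfc] at hPN2
      rw [hPN2, ← Finset.mul_sum] at hPNk
      exact (Nat.eq_of_mul_eq_mul_left (by omega) hPNk.symm).symm
  -- construct the partition
  refine ⟨fun j => (Icc 1 (3*t)).filter (fun i => W i = j.val), ?_, ?_, ?_⟩
  · intro j k hjk
    rw [Finset.disjoint_left]
    intro i hi hi'
    rw [mem_filter] at hi hi'
    exact hjk (Fin.ext (hi.2 ▸ hi'.2 ▸ rfl))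
  · ext i
    simp only [Finset.mem_biUnion, Finset.mem_univ, true_and, mem_filter]
    constructor
    · rintro ⟨j, hj, -⟩; exact hj
    · intro hi
      have := hWlt i hi
      exact ⟨⟨W i, by omega⟩, hi, rfl⟩
  · intro j
    have hv := j.isLt
    have hsplit : (Icc 1 (3*t)).filter (fun i => W i < j.val+1)
        = (Icc 1 (3*t)).filter (fun i => W i < j.val)
          ∪ (Icc 1 (3*t)).filter (fun i => W i = j.val) := by
      ext i
      simp only [mem_filter, mem_union, mem_Icc]
      omega
    have hdisj2 : Disjoint ((Icc 1 (3*t)).filter (fun i => W i < j.val))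
        ((Icc 1 (3*t)).filter (fun i => W i = j.val)) := by
      rw [Finset.disjoint_left]
      intro i hi hi'
      rw [mem_filter] at hi hi'
      omega
    have h1 := hQ (j.val+1) (by omega) (by omega)
    have h2 : ∑ i ∈ (Icc 1 (3*t)).filter (fun i => W i < j.val), a i = j.val*y := by
      by_cases h0 : j.val = 0
      · rw [h0]
        rw [Finset.filter_false_of_mem (fun i _ => by omega)]
        simp
      · exact hQ j.val (by omega) (by omega)
    rw [hsplit, Finset.sum_union hdisj2, h2] at h1
    have h3 : (j.val+1)*y = j.val*y + y := by ring
    rw [h3] at h1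
    exact Nat.add_left_cancel h1

lemma gauss (n : ℕ) : 2 * ∑ j ∈ range n, (j+1) = n*(n+1) := by
  induction n with
  | zero => simp
  | succ n ih => rw [Finset.sum_range_succ, mul_add, ih]; ring

set_option maxHeartbeats 1600000 in
lemma forward_dir (t y : ℕ) (a : ℕ → ℕ)
    (ht : 1 ≤ t) (hy : 1 ≤ y)
    (ha : ∀ i ∈ Finset.Icc 1 (3 * t), 0 < a i)
    (hsum : ∑ i ∈ Finset.Icc 1 (3 * t), a i = t * y)
    (S : Fin t → Finset ℕ)
    (hdisj : ∀ j k, j ≠ k → Disjoint (S j) (S k))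
    (hcover : Finset.univ.biUnion S = Finset.Icc 1 (3 * t))
    (hSy : ∀ j, ∑ i ∈ S j, a i = y) :
    (∃ σ, IsSchedule (Finset.Icc 1 (2 * t) ∪ Finset.Icc (2 * t + 1) (5 * t)) (p3P t y a) σ ∧
        Dsum (Finset.Icc 1 (2 * t)) (p3P t y a) (pi3P t y) σ ≤ t ^ 3 * y + t * (t + 1) / 2 ∧
        ∀ j ∈ Finset.Icc 1 (2 * t) ∪ Finset.Icc (2 * t + 1) (5 * t),
          ((σ j + p3P t y a j : ℕ) : ℤ) ≤ d3P t y j) := by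
  classical
  have hex : ∀ i ∈ Icc 1 (3*t), ∃ j, i ∈ S j := by
    intro i hi
    rw [← hcover] at hi
    simpa using Finset.mem_biUnion.1 hi
  set grp : ℕ → Fin t := fun i => if h : ∃ j, i ∈ S j then h.choose else ⟨0, ht⟩ with hgrpdef
  have hgrp : ∀ i ∈ Icc 1 (3*t), i ∈ S (grp i) := by
    intro i hi
    simp only [hgrpdef, dif_pos (hex i hi)]
    exact (hex i hi).choose_spec
  set pref : ℕ → ℕ := fun i => ∑ i' ∈ (S (grp i)).filter (· < i), a i' with hprefdef
  set σ : ℕ → ℕ := fun j =>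
    if j ≤ t then (j - 1) * (t*y+1) + t*y
    else if j ≤ 2*t then t*(t*y+1) + (j - (t+1)) * (t*y)
    else (grp (j - 2*t)).val * (t*y+1) + t * pref (j - 2*t) with hσdef
  -- basic formulas
  have hshort : ∀ u, u < t → σ (u+1) = u * (t*y+1) + t*y ∧ p3P t y a (u+1) = 1 := by
    intro u hu
    have h2 : u+1 ≤ t := by omega
    constructor
    · simp only [hσdef, if_pos h2, Nat.add_sub_cancel]
    · simp only [p3P, if_pos h2]
  have hlong : ∀ u, u < t → σ (t+1+u) = t*(t*y+1) + u * (t*y) ∧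
      p3P t y a (t+1+u) = t*y := by
    intro u hu
    have h3 : ¬ t+1+u ≤ t := by omega
    have h4 : t+1+u ≤ 2*t := by omega
    have h5 : t+1+u - (t+1) = u := by omega
    constructor
    · simp only [hσdef, if_neg h3, if_pos h4, h5]
    · simp only [p3P, if_neg h3, if_pos h4]
  have hnewf : ∀ i, 1 ≤ i → i ≤ 3*t → σ (2*t+i) = (grp i).val * (t*y+1) + t * pref i ∧
      p3P t y a (2*t+i) = t * a i := by
    intro i h1 h2
    have h3 : ¬ 2*t+i ≤ t := by omega
    have h4 : ¬ 2*t+i ≤ 2*t := by omega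
    have h5 : 2*t+i - 2*t = i := by omega
    constructor
    · simp only [hσdef, if_neg h3, if_neg h4, h5]
    · simp only [p3P, if_neg h3, if_neg h4, h5]
  -- key bound: pref i + a i ≤ y
  have hpref : ∀ i ∈ Icc 1 (3*t), pref i + a i ≤ y := by
    intro i hi
    have hins : insert i ((S (grp i)).filter (· < i)) ⊆ S (grp i) :=
      Finset.insert_subset (hgrp i hi) (filter_subset _ _)
    have hnm : i ∉ (S (grp i)).filter (· < i) := by simp [mem_filter]
    have := Finset.sum_le_sum_of_subset (f := a) hins
    rw [Finset.sum_insert hnm] at this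
    rw [hSy (grp i)] at this
    simp only [hprefdef]
    omega
  have hprefmono : ∀ i i', i < i' → grp i = grp i' → i ∈ Icc 1 (3*t) →
      pref i + a i ≤ pref i' := by
    intro i i' hlt hg hi
    have hins : insert i ((S (grp i)).filter (· < i)) ⊆ (S (grp i')).filter (· < i') := by
      rw [← hg]
      apply Finset.insert_subset
      · simp only [mem_filter]; exact ⟨hgrp i hi, hlt⟩
      · intro z hz; simp only [mem_filter] at hz ⊢; exact ⟨hz.1, by omega⟩
    have hnm : i ∉ (S (grp i)).filter (· < i) := by simp [mem_filter]
    have := Finset.sum_le_sum_of_subset (f := a) hins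
    rw [Finset.sum_insert hnm] at this
    simp only [hprefdef]
    omega
  have hprefmul : ∀ i ∈ Icc 1 (3*t), t * pref i + t * a i ≤ t * y := by
    intro i hi
    have h1 : t * (pref i + a i) ≤ t * y := Nat.mul_le_mul_left t (hpref i hi)
    have h2 : t * (pref i + a i) = t * pref i + t * a i := by ring
    omega
  have key : ∀ i j, 1 ≤ i → 1 ≤ j → i ≤ 5*t → j ≤ 5*t → i < j →
      (σ i + p3P t y a i ≤ σ j ∨ σ j + p3P t y a j ≤ σ i) := by
    intro i j h1i h1j h5i h5j hlt
    by_cases hjt : j ≤ t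
    · -- both short
      left
      obtain ⟨u, rfl⟩ : ∃ u, i = u+1 := ⟨i-1, by omega⟩
      obtain ⟨v, rfl⟩ : ∃ v, j = v+1 := ⟨j-1, by omega⟩
      obtain ⟨hσi, hpi⟩ := hshort u (by omega)
      obtain ⟨hσj, hpj⟩ := hshort v (by omega)
      rw [hσi, hpi, hσj]
      have h1 : (u+1) * (t*y+1) ≤ v * (t*y+1) := Nat.mul_le_mul_right _ (by omega)
      nlinarith [h1]
    · by_cases hj2t : j ≤ 2*t
      · obtain ⟨v, rfl⟩ : ∃ v, j = t+1+v := ⟨j-(t+1), by omega⟩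
        obtain ⟨hσj, hpj⟩ := hlong v (by omega)
        by_cases hit : i ≤ t
        · -- short, long
          left
          obtain ⟨u, rfl⟩ : ∃ u, i = u+1 := ⟨i-1, by omega⟩
          obtain ⟨hσi, hpi⟩ := hshort u (by omega)
          rw [hσi, hpi, hσj]
          have h1 : (u+1) * (t*y+1) ≤ t * (t*y+1) := Nat.mul_le_mul_right _ (by omega)
          nlinarith [h1]
        · -- long, long
          left
          obtain ⟨u, rfl⟩ : ∃ u, i = t+1+u := ⟨i-(t+1), by omega⟩
          obtain ⟨hσi, hpi⟩ := hlong u (by omega)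
          rw [hσi, hpi, hσj]
          have h1 : (u+1) * (t*y) ≤ v * (t*y) := Nat.mul_le_mul_right _ (by omega)
          nlinarith [h1]
      · -- j new
        obtain ⟨jj, rfl⟩ : ∃ jj, j = 2*t + jj := ⟨j - 2*t, by omega⟩
        have hjj : jj ∈ Icc 1 (3*t) := by simp only [mem_Icc]; omega
        obtain ⟨hσj, hpj⟩ := hnewf jj (by omega) (by omega)
        have hjm := hprefmul jj hjj
        by_cases hit : i ≤ t
        · -- short, new
          obtain ⟨u, rfl⟩ : ∃ u, i = u+1 := ⟨i-1, by omega⟩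
          obtain ⟨hσi, hpi⟩ := hshort u (by omega)
          by_cases hvk : (grp jj).val < u+1
          · right
            rw [hσi, hσj, hpj]
            have h1 : ((grp jj).val + 1) * (t*y+1) ≤ (u+1) * (t*y+1) :=
              Nat.mul_le_mul_right _ (by omega)
            nlinarith [h1, hjm]
          · left
            rw [hσi, hpi, hσj]
            have h1 : (u+1) * (t*y+1) ≤ (grp jj).val * (t*y+1) :=
              Nat.mul_le_mul_right _ (by omega)
            nlinarith [h1]
        · by_cases hi2t : i ≤ 2*t
          · -- long, new
            right
            obtain ⟨u, rfl⟩ : ∃ u, i = t+1+u := ⟨i-(t+1), by omega⟩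
            obtain ⟨hσi, hpi⟩ := hlong u (by omega)
            rw [hσi, hσj, hpj]
            have h1 : ((grp jj).val + 1) * (t*y+1) ≤ t * (t*y+1) :=
              Nat.mul_le_mul_right _ (by have := (grp jj).isLt; omega)
            nlinarith [h1, hjm]
          · -- new, new
            obtain ⟨ii, rfl⟩ : ∃ ii, i = 2*t + ii := ⟨i - 2*t, by omega⟩
            have hii : ii ∈ Icc 1 (3*t) := by simp only [mem_Icc]; omega
            obtain ⟨hσi, hpi⟩ := hnewf ii (by omega) (by omega)
            have him := hprefmul ii hii
            by_cases hg : grp ii = grp jj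
            · left
              rw [hσi, hpi, hσj, ← hg]
              have h1 : pref ii + a ii ≤ pref jj := hprefmono ii jj (by omega) hg hii
              have h2 : t * (pref ii + a ii) ≤ t * pref jj := Nat.mul_le_mul_left t h1
              nlinarith [h2]
            · have hvv : (grp ii).val ≠ (grp jj).val := fun h => hg (Fin.ext h)
              rcases Nat.lt_or_ge (grp ii).val (grp jj).val with hv | hv
              · left
                rw [hσi, hpi, hσj]
                have h1 : ((grp ii).val + 1) * (t*y+1) ≤ (grp jj).val * (t*y+1) :=
                  Nat.mul_le_mul_right _ (by omega)
                nlinarith [h1, him]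
              · right
                rw [hσi, hσj, hpj]
                have h1 : ((grp jj).val + 1) * (t*y+1) ≤ (grp ii).val * (t*y+1) :=
                  Nat.mul_le_mul_right _ (by omega)
                nlinarith [h1, hjm]
  refine ⟨σ, ?_, ?_, ?_⟩
  · -- IsSchedule
    intro i hi j hj hij
    simp only [Finset.mem_union, Finset.mem_Icc] at hi hj
    rcases Nat.lt_or_ge i j with hlt | hge
    · exact key i j (by omega) (by omega) (by omega) (by omega) hlt
    · exact (key j i (by omega) (by omega) (by omega) (by omega) (by omega)).symm
  · -- Dsum
    have hIccsplit : Icc 1 (2*t) = Icc 1 t ∪ Icc (t+1) (2*t) := by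
      ext x; simp only [mem_Icc, mem_union]; omega
    have hdisjSL : Disjoint (Icc 1 t) (Icc (t+1) (2*t)) := by
      rw [Finset.disjoint_left]; intro x hx hx'
      simp only [mem_Icc] at hx hx'; omega
    rw [Dsum, hIccsplit, Finset.sum_union hdisjSL]
    have hS0 : ∑ k ∈ Icc 1 t, disr (p3P t y a) (pi3P t y) σ k = 0 := by
      apply Finset.sum_eq_zero
      intro k hk
      simp only [mem_Icc] at hk
      obtain ⟨u, rfl⟩ : ∃ u, k = u+1 := ⟨k-1, by omega⟩
      obtain ⟨hσk, hpk⟩ := hshort u (by omega)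
      rw [disr, hσk, hpk]
      have hπ : pi3P t y (u+1) = u * (t*y+1) + t*y := by
        simp only [pi3P, if_pos (show u+1 ≤ t by omega), Nat.add_sub_cancel]
      rw [hπ]
      simp
    rw [hS0, zero_add]
    have hrw : ∑ l ∈ Icc (t+1) (2*t), disr (p3P t y a) (pi3P t y) σ l
        = ∑ u ∈ range t, disr (p3P t y a) (pi3P t y) σ (t+1+u) := by
      rw [show Icc (t+1) (2*t) = (range t).map ⟨fun u => t+1+u, add_right_injective (t+1)⟩ by
        ext x
        simp only [mem_Icc, Finset.mem_map, Finset.mem_range, Function.Embedding.coeFn_mk]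
        constructor
        · intro hx; exact ⟨x - (t+1), by omega, by omega⟩
        · rintro ⟨u, hu, rfl⟩; omega]
      rw [Finset.sum_map]
      rfl
    rw [hrw]
    have hval : ∀ u ∈ range t, disr (p3P t y a) (pi3P t y) σ (t+1+u)
        = t*(t*y) + (t - u) := by
      intro u hu
      simp only [mem_range] at hu
      obtain ⟨hσl, hpl⟩ := hlong u hu
      have hπ : pi3P t y (t+1+u) = u * (t*y+1) := by
        have h3 : ¬ t+1+u ≤ t := by omega
        simp only [pi3P, if_neg h3]
        have : t+1+u-t-1 = u := by omega
        rw [this]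
      rw [disr, hσl, hpl, hπ]
      have hcast : ((t*(t*y+1) + u*(t*y) + t*y : ℕ) : ℤ) - ((u*(t*y+1) + t*y : ℕ) : ℤ)
          = ((t*(t*y) + (t - u) : ℕ) : ℤ) := by
        push_cast [Nat.cast_sub (le_of_lt hu)]
        ring
      rw [hcast, Int.natAbs_natCast]
    rw [Finset.sum_congr rfl hval, Finset.sum_add_distrib, Finset.sum_const, smul_eq_mul,
      Finset.card_range]
    have hrefl : ∑ u ∈ range t, (t - u) = ∑ u ∈ range t, (u+1) := by
      have := Finset.sum_range_reflect (fun j => j+1) t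
      rw [← this]
      apply Finset.sum_congr rfl
      intro u hu
      simp only [mem_range] at hu
      omega
    rw [hrefl]
    have hg2 := gauss t
    have hcube : t * (t*(t*y)) = t^3*y := by ring
    rw [hcube]
    generalize hGG : ∑ j ∈ range t, (j+1) = G at hg2 ⊢
    generalize t^3*y = Q
    generalize hPP : t*(t+1) = P at hg2 ⊢
    omega
  · -- deadlines
    intro j hj
    simp only [Finset.mem_union, Finset.mem_Icc] at hj
    by_cases hjt : j ≤ t
    · obtain ⟨u, rfl⟩ : ∃ u, j = u+1 := ⟨j-1, by omega⟩
      obtain ⟨hσj, hpj⟩ := hshort u (by omega)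
      have hd : d3P t y (u+1) = (t : ℤ) * (2*t*y+1) := by
        simp only [d3P, if_pos (show u+1 ≤ 2*t by omega)]
      rw [hσj, hpj, hd]
      have hN : u*(t*y+1) + t*y + 1 ≤ t * (2*t*y+1) := by
        have h1 : (u+1) * (t*y+1) ≤ t * (t*y+1) := Nat.mul_le_mul_right _ (by omega)
        nlinarith [h1, Nat.zero_le (t*(t*y))]
      exact_mod_cast hN
    · by_cases hj2t : j ≤ 2*t
      · obtain ⟨u, rfl⟩ : ∃ u, j = t+1+u := ⟨j-(t+1), by omega⟩
        obtain ⟨hσj, hpj⟩ := hlong u (by omega)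
        have hd : d3P t y (t+1+u) = (t : ℤ) * (2*t*y+1) := by
          simp only [d3P, if_pos hj2t]
        rw [hσj, hpj, hd]
        have hN : t*(t*y+1) + u*(t*y) + t*y ≤ t * (2*t*y+1) := by
          have h1 : (u+1) * (t*y) ≤ t * (t*y) := Nat.mul_le_mul_right _ (by omega)
          nlinarith [h1]
        exact_mod_cast hN
      · obtain ⟨jj, rfl⟩ : ∃ jj, j = 2*t + jj := ⟨j - 2*t, by omega⟩
        have hjj : jj ∈ Icc 1 (3*t) := by simp only [mem_Icc]; omega
        obtain ⟨hσj, hpj⟩ := hnewf jj (by omega) (by omega)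
        have hjm := hprefmul jj hjj
        have hd : d3P t y (2*t+jj) = (t : ℤ)^2*y + t - 1 := by
          simp only [d3P, if_neg (by omega : ¬ 2*t+jj ≤ 2*t)]
        rw [hσj, hpj, hd]
        have hN : (grp jj).val * (t*y+1) + t * pref jj + t * a jj + 1 ≤ t^2*y + t := by
          have h1 : ((grp jj).val + 1) * (t*y+1) ≤ t * (t*y+1) :=
            Nat.mul_le_mul_right _ (by have := (grp jj).isLt; omega)
          nlinarith [h1, hjm]
        have hN2 : (grp jj).val * (t*y+1) + t * pref jj + t * a jj ≤ t^2*y + t - 1 :=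
          Nat.le_sub_one_of_lt hN
        have hle1 : 1 ≤ t^2*y + t := le_trans ht (Nat.le_add_left t _)
        have hcast : ((t^2*y + t - 1 : ℕ) : ℤ) = (t:ℤ)^2*y + t - 1 := by
          push_cast [Nat.cast_sub hle1]
          ring
        exact le_trans (Int.ofNat_le.mpr hN2) (le_of_eq hcast)

/-- Theorem 2, part 1: 3-PARTITION reduces to `1|Δ̄ ≤ ε, ΣU ≤ 0|−`. Old jobs are
`{1, …, 2t}`, new jobs are `{2t+1, …, 5t}`, and ε = t³y + t(t+1)/2. -/
theorem three_partition_reduction_nTardy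
    (t y : ℕ) (a : ℕ → ℕ)
    (ht : 1 ≤ t) (hy : 1 ≤ y)
    (ha : ∀ i ∈ Finset.Icc 1 (3 * t), 0 < a i)
    (hsum : ∑ i ∈ Finset.Icc 1 (3 * t), a i = t * y) :
    (∃ S : Fin t → Finset ℕ,
        (∀ j k, j ≠ k → Disjoint (S j) (S k)) ∧
        Finset.univ.biUnion S = Finset.Icc 1 (3 * t) ∧
        ∀ j, ∑ i ∈ S j, a i = y) ↔
      (∃ σ, IsSchedule (Finset.Icc 1 (2 * t) ∪ Finset.Icc (2 * t + 1) (5 * t)) (p3P t y a) σ ∧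
        Dsum (Finset.Icc 1 (2 * t)) (p3P t y a) (pi3P t y) σ ≤ t ^ 3 * y + t * (t + 1) / 2 ∧
        ∀ j ∈ Finset.Icc 1 (2 * t) ∪ Finset.Icc (2 * t + 1) (5 * t),
          ((σ j + p3P t y a j : ℕ) : ℤ) ≤ d3P t y j) := by
  constructor
  · rintro ⟨S, h1, h2, h3⟩
    exact forward_dir t y a ht hy ha hsum S h1 h2 h3
  · rintro ⟨σ, h1, h2, h3⟩
    exact reverse_dir t y a ht hy ha hsum σ h1 h2 h3
end
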